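/- arXiv:1907.01186 — 3 statements merged into one kernel-verified Lean document; each statement's English description precedes it below -/
import Mathlib

section
/- Let f : ℝ³ → ℝ be smooth with compact support, and define the John transform r(x,y,u,v) = ∫_{-∞}^{∞} f(x + u z, y + v z, z) dz. Then r satisfies John's equation: ∂²r/∂y∂u − ∂²r/∂x∂v = 0 at every point (x,y,u,v). -/
open MeasureTheory Metric Set

open MeasureTheory Metric Set

lemma john_key (g : ℝ × ℝ × ℝ → ℝ) (hg : ContDiff ℝ (⊤ : ℕ∞) g) (hs : HasCompactSupport g)
    (c b₁ b₂ w₁ w₂ : ℝ → ℝ) (hc : Continuous c) (hb₁ : Continuous b₁) (hb₂ : Continuous b₂)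
    (hw₁ : Continuous w₁) (hw₂ : Continuous w₂) (t₀ : ℝ) :
    HasDerivAt (fun t => ∫ z : ℝ, c z * g (b₁ z + t * w₁ z, b₂ z + t * w₂ z, z))
      (∫ z : ℝ, c z * fderiv ℝ g (b₁ z + t₀ * w₁ z, b₂ z + t₀ * w₂ z, z) (w₁ z, w₂ z, 0)) t₀ := by
  obtain ⟨M, hM⟩ := hs.isCompact.isBounded.subset_closedBall 0
  obtain ⟨C, hC⟩ := (hs.fderiv ℝ).exists_bound_of_continuous (hg.continuous_fderiv (by simp))
  have hgd : Differentiable ℝ g := hg.differentiable (by simp)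
  -- key vanishing fact
  have hzero : ∀ p : ℝ × ℝ × ℝ, M < |p.2.2| → fderiv ℝ g p = 0 := by
    intro p hp
    have hnot : p ∉ tsupport g := by
      intro hmem
      have := hM hmem
      rw [mem_closedBall, dist_zero_right] at this
      have : |p.2.2| ≤ M := le_trans (by
        calc |p.2.2| = ‖p.2.2‖ := rfl
        _ ≤ ‖p.2‖ := norm_snd_le _
        _ ≤ ‖p‖ := norm_snd_le _) this
      linarith
    have : p ∉ Function.support (fderiv ℝ g) := fun h => hnot (support_fderiv_subset ℝ h)
    simpa [Function.mem_support, not_not] using this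
  have hgzero : ∀ p : ℝ × ℝ × ℝ, M < |p.2.2| → g p = 0 := by
    intro p hp
    have hnot : p ∉ tsupport g := by
      intro hmem
      have := hM hmem
      rw [mem_closedBall, dist_zero_right] at this
      have : |p.2.2| ≤ M := le_trans (by
        calc |p.2.2| = ‖p.2.2‖ := rfl
        _ ≤ ‖p.2‖ := norm_snd_le _
        _ ≤ ‖p‖ := norm_snd_le _) this
      linarith
    exact image_eq_zero_of_notMem_tsupport hnot
  set q : ℝ → ℝ → ℝ × ℝ × ℝ := fun t z => (b₁ z + t * w₁ z, b₂ z + t * w₂ z, z) with hq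
  have hqcont : ∀ t, Continuous (fun z => q t z) := by
    intro t; fun_prop
  set F : ℝ → ℝ → ℝ := fun t z => c z * g (q t z)
  set F' : ℝ → ℝ → ℝ := fun t z => c z * fderiv ℝ g (q t z) (w₁ z, w₂ z, 0)
  have hF'cont : ∀ t, Continuous (F' t) := by
    intro t
    apply hc.mul
    have h1 : Continuous (fun z => fderiv ℝ g (q t z)) :=
      (hg.continuous_fderiv (by simp)).comp (hqcont t)
    have h2 : Continuous (fun z => ((w₁ z, w₂ z, 0) : ℝ × ℝ × ℝ)) := by fun_prop
    exact isBoundedBilinearMap_apply.continuous.comp (h1.prodMk h2)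
  set bound : ℝ → ℝ := fun z => Set.indicator (Icc (-M) M) (fun z => |c z| * (C * (|w₁ z| + |w₂ z|))) z
  have hbound_int : Integrable bound := by
    apply (IntegrableOn.integrable_indicator _ measurableSet_Icc)
    exact (Continuous.integrableOn_Icc (by fun_prop))
  have hderiv : ∀ t z, HasDerivAt (fun s => F s z) (F' t z) t := by
    intro t z
    have h1 : HasDerivAt (fun s => b₁ z + s * w₁ z) (w₁ z) t :=
      ((hasDerivAt_mul_const (w₁ z)).const_add _)
    have h2 : HasDerivAt (fun s => b₂ z + s * w₂ z) (w₂ z) t :=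
      ((hasDerivAt_mul_const (w₂ z)).const_add _)
    have h3 : HasDerivAt (fun _ : ℝ => z) 0 t := hasDerivAt_const _ _
    have hγ : HasDerivAt (fun s => q s z) (w₁ z, w₂ z, 0) t := h1.prodMk (h2.prodMk h3)
    exact ((hgd (q t z)).hasFDerivAt.comp_hasDerivAt t hγ).const_mul (c z)
  have hbd : ∀ t z, ‖F' t z‖ ≤ bound z := by
    intro t z
    simp only [bound]
    by_cases hz : z ∈ Icc (-M) M
    · rw [Set.indicator_of_mem hz]
      have hb : ‖fderiv ℝ g (q t z) (w₁ z, w₂ z, 0)‖ ≤ C * (|w₁ z| + |w₂ z|) := by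
        calc ‖fderiv ℝ g (q t z) (w₁ z, w₂ z, 0)‖
            ≤ ‖fderiv ℝ g (q t z)‖ * ‖((w₁ z, w₂ z, 0) : ℝ × ℝ × ℝ)‖ :=
              ContinuousLinearMap.le_opNorm _ _
          _ ≤ C * (|w₁ z| + |w₂ z|) := by
              apply mul_le_mul (hC _) ?_ (norm_nonneg _) (le_trans (norm_nonneg (fderiv ℝ g (q t z))) (hC (q t z)))
              rw [Prod.norm_def, Prod.norm_def]
              simp only [norm_zero, Real.norm_eq_abs]
              apply max_le
              · linarith [abs_nonneg (w₁ z), abs_nonneg (w₂ z)]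
              · apply max_le <;> [skip; positivity]
                linarith [abs_nonneg (w₁ z), abs_nonneg (w₂ z)]
      calc ‖F' t z‖ = |c z| * ‖fderiv ℝ g (q t z) (w₁ z, w₂ z, 0)‖ := by
            simp [F', abs_mul, Real.norm_eq_abs]
        _ ≤ |c z| * (C * (|w₁ z| + |w₂ z|)) := by
            exact mul_le_mul_of_nonneg_left hb (abs_nonneg _)
    · rw [Set.indicator_of_notMem hz]
      have habs : M < |z| := by
        rw [Set.mem_Icc, not_and_or, not_le, not_le] at hz
        rcases hz with h | h
        · linarith [neg_le_abs z]
        · linarith [le_abs_self z]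
      have h0 : fderiv ℝ g (q t z) = 0 := hzero (q t z) habs
      simp [F', h0]
  have hcs : ∀ t, HasCompactSupport (F t) := by
    intro t
    apply HasCompactSupport.intro (isCompact_Icc (a := -M) (b := M))
    intro z hz
    have habs : M < |z| := by
      rw [Set.mem_Icc, not_and_or, not_le, not_le] at hz
      rcases hz with h | h
      · linarith [neg_le_abs z]
      · linarith [le_abs_self z]
    show c z * g (q t z) = 0
    rw [hgzero (q t z) habs, mul_zero]
  have hint : ∀ t, Integrable (F t) := fun t =>
    ((hc.mul ((hg.continuous).comp (hqcont t)))).integrable_of_hasCompactSupport (hcs t)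
  have := (hasDerivAt_integral_of_dominated_loc_of_deriv_le (F := F) (F' := F') (μ := volume)
    (bound := bound) (s := Metric.ball t₀ 1) (Metric.ball_mem_nhds _ one_pos)
    (Filter.Eventually.of_forall fun t => ((hc.mul ((hg.continuous).comp (hqcont t)))).aestronglyMeasurable)
    (hint t₀) ((hF'cont t₀).aestronglyMeasurable)
    (Filter.Eventually.of_forall fun z => fun t _ => hbd t z) hbound_int
    (Filter.Eventually.of_forall fun z => fun t _ => hderiv t z)).2
  exact this


lemma john_mixed (f : ℝ × ℝ × ℝ → ℝ) (hf : ContDiff ℝ (⊤ : ℕ∞) f) (p a b : ℝ × ℝ × ℝ) :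
    fderiv ℝ (fun q => fderiv ℝ f q a) p b = fderiv ℝ (fun q => fderiv ℝ f q b) p a := by
  have h2 : HasFDerivAt (fderiv ℝ f) (fderiv ℝ (fderiv ℝ f) p) p :=
    (((hf.fderiv_right (m := 1) (by exact WithTop.coe_le_coe.mpr le_top)).differentiable (by simp)) p).hasFDerivAt
  have e : ∀ w : ℝ × ℝ × ℝ, HasFDerivAt (fun q => fderiv ℝ f q w)
      ((ContinuousLinearMap.apply ℝ ℝ w).comp (fderiv ℝ (fderiv ℝ f) p)) p := by
    intro w
    exact (ContinuousLinearMap.apply ℝ ℝ w).hasFDerivAt.comp p h2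
  rw [(e a).fderiv, (e b).fderiv]
  exact second_derivative_symmetric (fun q => ((hf.differentiable (by simp)) q).hasFDerivAt) h2 b a

/-- The John transform of a smooth compactly supported function satisfies John's equation
`∂²r/∂y∂u − ∂²r/∂x∂v = 0`. -/
theorem john_transform_satisfies_john_equation
    (f : ℝ × ℝ × ℝ → ℝ) (hf : ContDiff ℝ (⊤ : ℕ∞) f) (hsupp : HasCompactSupport f)
    (r : ℝ → ℝ → ℝ → ℝ → ℝ)
    (hr : ∀ x y u v : ℝ, r x y u v = ∫ z : ℝ, f (x + u * z, y + v * z, z))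
    (x y u v : ℝ) :
    deriv (fun y' => deriv (fun u' => r x y' u' v) u) y
      - deriv (fun x' => deriv (fun v' => r x' y u v') v) x = 0 := by
  set f₁ : ℝ × ℝ × ℝ → ℝ := fun p => fderiv ℝ f p (1, 0, 0) with hf₁def
  set f₂ : ℝ × ℝ × ℝ → ℝ := fun p => fderiv ℝ f p (0, 1, 0) with hf₂def
  have hclm : ∀ a : ℝ × ℝ × ℝ, ContDiff ℝ (⊤ : ℕ∞) (fun p => fderiv ℝ f p a) :=
    fun a => (hf.fderiv_right ((by simp))).clm_apply contDiff_const
  have hcs : ∀ a : ℝ × ℝ × ℝ, HasCompactSupport (fun p => fderiv ℝ f p a) := by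
    intro a
    exact (hsupp.fderiv ℝ).comp_left (g := fun L : (ℝ × ℝ × ℝ) →L[ℝ] ℝ => L a) rfl
  have hf₁ : ContDiff ℝ (⊤ : ℕ∞) f₁ := hclm _
  have hf₂ : ContDiff ℝ (⊤ : ℕ∞) f₂ := hclm _
  have hs₁ : HasCompactSupport f₁ := hcs _
  have hs₂ : HasCompactSupport f₂ := hcs _
  have hsmul : ∀ (p : ℝ × ℝ × ℝ) (z : ℝ),
      fderiv ℝ f p (z, 0, 0) = z * f₁ p ∧ fderiv ℝ f p (0, z, 0) = z * f₂ p := by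
    intro p z
    constructor
    · have h : ((z, 0, 0) : ℝ × ℝ × ℝ) = z • ((1:ℝ), (0:ℝ), (0:ℝ)) := by simp
      rw [h, ContinuousLinearMap.map_smul, smul_eq_mul]
    · have h : ((0, z, 0) : ℝ × ℝ × ℝ) = z • ((0:ℝ), (1:ℝ), (0:ℝ)) := by simp
      rw [h, ContinuousLinearMap.map_smul, smul_eq_mul]
  -- first inner derivative
  have hA : ∀ y' : ℝ, deriv (fun u' => r x y' u' v) u
      = ∫ z : ℝ, z * f₁ (x + u * z, y' + v * z, z) := by
    intro y'
    have h := john_key f hf hsupp (fun _ => 1) (fun _ => x) (fun z => y' + v * z)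
      (fun z => z) (fun _ => 0) continuous_const continuous_const (by fun_prop)
      continuous_id continuous_const u
    have hfun : (fun u' => r x y' u' v)
        = (fun t => ∫ z : ℝ, (1:ℝ) * f (x + t * z, (y' + v * z) + t * 0, z)) := by
      funext t; rw [hr]; simp
    rw [hfun, h.deriv]
    congr 1
    funext z
    rw [one_mul, mul_zero, add_zero, (hsmul _ z).1]
  have hB : ∀ x' : ℝ, deriv (fun v' => r x' y u v') v
      = ∫ z : ℝ, z * f₂ (x' + u * z, y + v * z, z) := by
    intro x'
    have h := john_key f hf hsupp (fun _ => 1) (fun z => x' + u * z) (fun _ => y)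
      (fun _ => 0) (fun z => z) continuous_const (by fun_prop) continuous_const
      continuous_const continuous_id v
    have hfun : (fun v' => r x' y u v')
        = (fun t => ∫ z : ℝ, (1:ℝ) * f ((x' + u * z) + t * 0, y + t * z, z)) := by
      funext t; rw [hr]; simp
    rw [hfun, h.deriv]
    congr 1
    funext z
    rw [one_mul, mul_zero, add_zero, (hsmul _ z).2]
  -- outer derivatives
  have hL : deriv (fun y' => deriv (fun u' => r x y' u' v) u) y
      = ∫ z : ℝ, z * fderiv ℝ f₁ (x + u * z, y + v * z, z) (0, 1, 0) := by
    have h := john_key f₁ hf₁ hs₁ (fun z => z) (fun z => x + u * z) (fun z => v * z)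
      (fun _ => 0) (fun _ => 1) continuous_id (by fun_prop) (by fun_prop)
      continuous_const continuous_const y
    have hfun : (fun y' => deriv (fun u' => r x y' u' v) u)
        = (fun t => ∫ z : ℝ, z * f₁ ((x + u * z) + t * 0, v * z + t * 1, z)) := by
      funext t
      rw [hA t]
      congr 1
      funext z
      rw [mul_zero, add_zero, mul_one, add_comm (v * z) t]
    rw [hfun, h.deriv]
    congr 1
    funext z
    rw [mul_zero, add_zero, mul_one, add_comm (v * z) y]
  have hR : deriv (fun x' => deriv (fun v' => r x' y u v') v) x
      = ∫ z : ℝ, z * fderiv ℝ f₂ (x + u * z, y + v * z, z) (1, 0, 0) := by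
    have h := john_key f₂ hf₂ hs₂ (fun z => z) (fun z => u * z) (fun z => y + v * z)
      (fun _ => 1) (fun _ => 0) continuous_id (by fun_prop) (by fun_prop)
      continuous_const continuous_const x
    have hfun : (fun x' => deriv (fun v' => r x' y u v') v)
        = (fun t => ∫ z : ℝ, z * f₂ (u * z + t * 1, (y + v * z) + t * 0, z)) := by
      funext t
      rw [hB t]
      congr 1
      funext z
      rw [mul_zero, add_zero, mul_one, add_comm (u * z) t]
    rw [hfun, h.deriv]
    congr 1
    funext z
    rw [mul_zero, add_zero, mul_one, add_comm (u * z) x]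
  rw [hL, hR, sub_eq_zero]
  congr 1
  funext z
  rw [hf₁def, hf₂def, john_mixed f hf _ _ _]
end

section
/- (Asgeirsson's theorem, mean-value form for entire solutions) Let F : ℝ⁴ → ℝ be a smooth solution of the ultrahyperbolic equation ∂²F/∂ξ₁² + ∂²F/∂ξ₄² = ∂²F/∂ξ₂² + ∂²F/∂ξ₃². Then for every point ξ = (ξ₁,ξ₂,ξ₃,ξ₄) and every R > 0, ∫₀^{2π} F(ξ₁ + R cos θ, ξ₂, ξ₃, ξ₄ + R sin θ) dθ = ∫₀^{2π} F(ξ₁, ξ₂ + R cos θ, ξ₃ + R sin θ, ξ₄) dθ. -/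
open Real MeasureTheory intervalIntegral Set

noncomputable section AsgeirssonAux

/-! ### Generic wrappers for parametric interval integrals -/

lemma contParam {X : Type*} [TopologicalSpace X] {f : X → ℝ → ℝ} (hf : Continuous ↿f)
    (a b : ℝ) : Continuous fun x => ∫ t in a..b, f x t :=
  intervalIntegral.continuous_parametric_intervalIntegral_of_continuous' hf a b

lemma derivParam {f f' : ℝ → ℝ → ℝ} {a b : ℝ} (hf : Continuous ↿f) (hf' : Continuous ↿f')
    (hd : ∀ x t, HasDerivAt (fun y => f y t) (f' x t) x) (x₀ : ℝ) :
    HasDerivAt (fun x => ∫ t in a..b, f x t) (∫ t in a..b, f' x₀ t) x₀ := by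
  obtain ⟨C, hC⟩ := ((isCompact_closedBall x₀ 1).prod isCompact_uIcc).exists_bound_of_continuousOn
    (hf'.continuousOn (s := Metric.closedBall x₀ 1 ×ˢ Set.uIcc a b))
  have key := intervalIntegral.hasDerivAt_integral_of_dominated_loc_of_deriv_le
    (F := f) (F' := f') (x₀ := x₀) (a := a) (b := b) (bound := fun _ => C) (μ := volume)
    (Metric.ball_mem_nhds x₀ one_pos)
    (Filter.Eventually.of_forall fun x => (hf.uncurry_left x).aestronglyMeasurable)
    ((hf.uncurry_left x₀).intervalIntegrable a b)
    ((hf'.uncurry_left x₀).aestronglyMeasurable)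
    (Filter.Eventually.of_forall fun t ht x hx =>
      hC (x, t) ⟨Metric.ball_subset_closedBall hx, Set.uIoc_subset_uIcc ht⟩)
    (intervalIntegrable_const)
    (Filter.Eventually.of_forall fun t _ x _ => hd x t)
  exact key.2

lemma ddCont {X : Type*} [TopologicalSpace X] {f : X → ℝ → ℝ → ℝ} {a b c d : ℝ}
    (hf : Continuous fun p : X × ℝ × ℝ => f p.1 p.2.1 p.2.2) :
    Continuous fun x => ∫ θ in a..b, ∫ φ in c..d, f x θ φ := by
  apply contParam (f := fun x θ => ∫ φ in c..d, f x θ φ)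
  have h : Continuous fun q : (X × ℝ) × ℝ => (q.1.1, (q.1.2, q.2)) := by fun_prop
  exact contParam (X := X × ℝ) (f := fun p φ => f p.1 p.2 φ) (hf.comp h) c d

lemma ddDeriv {f f' : ℝ → ℝ → ℝ → ℝ} {a b c d : ℝ}
    (hf : Continuous fun p : ℝ × ℝ × ℝ => f p.1 p.2.1 p.2.2)
    (hf' : Continuous fun p : ℝ × ℝ × ℝ => f' p.1 p.2.1 p.2.2)
    (hd : ∀ x θ φ, HasDerivAt (fun y => f y θ φ) (f' x θ φ) x) (x₀ : ℝ) :
    HasDerivAt (fun x => ∫ θ in a..b, ∫ φ in c..d, f x θ φ)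
      (∫ θ in a..b, ∫ φ in c..d, f' x₀ θ φ) x₀ := by
  have inner : ∀ (g : ℝ → ℝ → ℝ → ℝ),
      (Continuous fun p : ℝ × ℝ × ℝ => g p.1 p.2.1 p.2.2) →
      Continuous ↿(fun x θ => ∫ φ in c..d, g x θ φ) := by
    intro g hg
    exact contParam (X := ℝ × ℝ) (f := fun p φ => g p.1 p.2 φ)
      (hg.comp (by fun_prop : Continuous fun q : (ℝ × ℝ) × ℝ => (q.1.1, (q.1.2, q.2)))) c d
  refine derivParam (f := fun x θ => ∫ φ in c..d, f x θ φ)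
    (f' := fun x θ => ∫ φ in c..d, f' x θ φ) (inner f hf) (inner f' hf') ?_ x₀
  intro x θ
  refine derivParam (f := fun y φ => f y θ φ) (f' := fun y φ => f' y θ φ) ?_ ?_ ?_ x
  · exact hf.comp (by fun_prop : Continuous fun q : ℝ × ℝ => (q.1, (θ, q.2)))
  · exact hf'.comp (by fun_prop : Continuous fun q : ℝ × ℝ => (q.1, (θ, q.2)))
  · exact fun y φ => hd y θ φ

lemma ddSwap {A : ℝ → ℝ → ℝ} (hA' : Continuous fun p : ℝ × ℝ => A p.1 p.2)
    {a b c d : ℝ} (hab : a ≤ b) (hcd : c ≤ d) :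
    ∫ θ in a..b, ∫ φ in c..d, A θ φ = ∫ φ in c..d, ∫ θ in a..b, A θ φ := by
  have hA : Continuous ↿A := hA'
  have h1 : Integrable (Function.uncurry A)
      ((volume.restrict (Set.Ioc a b)).prod (volume.restrict (Set.Ioc c d))) := by
    rw [Measure.prod_restrict]
    exact ((hA.locallyIntegrable (μ := volume)).integrableOn_isCompact
      (isCompact_Icc.prod isCompact_Icc)).mono_set
      (Set.prod_mono Set.Ioc_subset_Icc_self Set.Ioc_subset_Icc_self)
  have := MeasureTheory.integral_integral_swap h1
  simp only [intervalIntegral.integral_of_le hab, intervalIntegral.integral_of_le hcd]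
  exact this

lemma dd_add {A B : ℝ → ℝ → ℝ} (hA' : Continuous fun p : ℝ × ℝ => A p.1 p.2)
    (hB' : Continuous fun p : ℝ × ℝ => B p.1 p.2) {a b c d : ℝ} :
    (∫ θ in a..b, ∫ φ in c..d, (A θ φ + B θ φ))
      = (∫ θ in a..b, ∫ φ in c..d, A θ φ) + ∫ θ in a..b, ∫ φ in c..d, B θ φ := by
  have hA : Continuous ↿A := hA'
  have hB : Continuous ↿B := hB'
  have h1 : ∀ θ, (∫ φ in c..d, (A θ φ + B θ φ))
      = (∫ φ in c..d, A θ φ) + ∫ φ in c..d, B θ φ := fun θ =>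
    intervalIntegral.integral_add ((hA.uncurry_left θ).intervalIntegrable _ _)
      ((hB.uncurry_left θ).intervalIntegrable _ _)
  simp only [h1]
  exact intervalIntegral.integral_add
    ((contParam hA c d).intervalIntegrable _ _) ((contParam hB c d).intervalIntegrable _ _)

lemma dd_congr {A B : ℝ → ℝ → ℝ} {a b c d : ℝ} (h : ∀ θ φ, A θ φ = B θ φ) :
    (∫ θ in a..b, ∫ φ in c..d, A θ φ) = ∫ θ in a..b, ∫ φ in c..d, B θ φ := by
  simp only [h]

/-! ### The geometric setup -/

variable (F : ℝ × ℝ × ℝ × ℝ → ℝ) (ξ₁ ξ₂ ξ₃ ξ₄ : ℝ)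

def Pt (r s θ φ : ℝ) : ℝ × ℝ × ℝ × ℝ :=
  (ξ₁ + r * cos θ, ξ₂ + s * cos φ, ξ₃ + s * sin φ, ξ₄ + r * sin θ)

def ov (θ : ℝ) : ℝ × ℝ × ℝ × ℝ := (cos θ, 0, 0, sin θ)
def op (θ : ℝ) : ℝ × ℝ × ℝ × ℝ := (-sin θ, 0, 0, cos θ)
def ev (φ : ℝ) : ℝ × ℝ × ℝ × ℝ := (0, cos φ, sin φ, 0)
def ep (φ : ℝ) : ℝ × ℝ × ℝ × ℝ := (0, -sin φ, cos φ, 0)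
def VE1 : ℝ × ℝ × ℝ × ℝ := (1, 0, 0, 0)
def VE2 : ℝ × ℝ × ℝ × ℝ := (0, 1, 0, 0)
def VE3 : ℝ × ℝ × ℝ × ℝ := (0, 0, 1, 0)
def VE4 : ℝ × ℝ × ℝ × ℝ := (0, 0, 0, 1)

def D1 (x v : ℝ × ℝ × ℝ × ℝ) : ℝ := fderiv ℝ F x v
def D2 (x w v : ℝ × ℝ × ℝ × ℝ) : ℝ := fderiv ℝ (fderiv ℝ F) x w v

lemma cov : Continuous ov := by unfold ov; fun_prop
lemma cop : Continuous op := by unfold op; fun_prop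
lemma cev : Continuous ev := by unfold ev; fun_prop
lemma cep : Continuous ep := by unfold ep; fun_prop

lemma contPt4 : Continuous fun p : ℝ × ℝ × ℝ × ℝ =>
    Pt ξ₁ ξ₂ ξ₃ ξ₄ p.1 p.2.1 p.2.2.1 p.2.2.2 := by unfold Pt; fun_prop

lemma hasDerivAt_op (θ : ℝ) : HasDerivAt op (-(ov θ)) θ := by
  have h1 : HasDerivAt (fun θ : ℝ => -sin θ) (-cos θ) θ := (Real.hasDerivAt_sin θ).neg
  have h4 : HasDerivAt cos (-sin θ) θ := Real.hasDerivAt_cos θ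
  have := h1.prodMk ((hasDerivAt_const θ (0:ℝ)).prodMk ((hasDerivAt_const θ (0:ℝ)).prodMk h4))
  show HasDerivAt (fun θ => op θ) _ θ
  simpa [op, ov, Prod.neg_mk] using this

lemma hasDerivAt_ep (φ : ℝ) : HasDerivAt ep (-(ev φ)) φ := by
  have h2 : HasDerivAt (fun φ : ℝ => -sin φ) (-cos φ) φ := (Real.hasDerivAt_sin φ).neg
  have h3 : HasDerivAt cos (-sin φ) φ := Real.hasDerivAt_cos φ
  have := (hasDerivAt_const φ (0:ℝ)).prodMk (h2.prodMk (h3.prodMk (hasDerivAt_const φ (0:ℝ))))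
  show HasDerivAt (fun φ => ep φ) _ φ
  simpa [ep, ev, Prod.neg_mk] using this

lemma pt_path_r (s θ φ r : ℝ) :
    HasDerivAt (fun r => Pt ξ₁ ξ₂ ξ₃ ξ₄ r s θ φ) (ov θ) r := by
  have h1 : HasDerivAt (fun r : ℝ => ξ₁ + r * cos θ) (cos θ) r := by
    simpa using ((hasDerivAt_id r).mul_const (cos θ)).const_add ξ₁
  have h4 : HasDerivAt (fun r : ℝ => ξ₄ + r * sin θ) (sin θ) r := by
    simpa using ((hasDerivAt_id r).mul_const (sin θ)).const_add ξ₄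
  exact h1.prodMk ((hasDerivAt_const r _).prodMk ((hasDerivAt_const r _).prodMk h4))

lemma pt_path_s (r θ φ s : ℝ) :
    HasDerivAt (fun s => Pt ξ₁ ξ₂ ξ₃ ξ₄ r s θ φ) (ev φ) s := by
  have h2 : HasDerivAt (fun s : ℝ => ξ₂ + s * cos φ) (cos φ) s := by
    simpa using ((hasDerivAt_id s).mul_const (cos φ)).const_add ξ₂
  have h3 : HasDerivAt (fun s : ℝ => ξ₃ + s * sin φ) (sin φ) s := by
    simpa using ((hasDerivAt_id s).mul_const (sin φ)).const_add ξ₃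
  exact (hasDerivAt_const s _).prodMk (h2.prodMk (h3.prodMk (hasDerivAt_const s _)))

lemma pt_path_theta (r s φ θ : ℝ) :
    HasDerivAt (fun θ => Pt ξ₁ ξ₂ ξ₃ ξ₄ r s θ φ) (r • op θ) θ := by
  have h1 : HasDerivAt (fun θ : ℝ => ξ₁ + r * cos θ) (r * -sin θ) θ :=
    ((Real.hasDerivAt_cos θ).const_mul r).const_add ξ₁
  have h4 : HasDerivAt (fun θ : ℝ => ξ₄ + r * sin θ) (r * cos θ) θ :=
    ((Real.hasDerivAt_sin θ).const_mul r).const_add ξ₄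
  have := h1.prodMk ((hasDerivAt_const θ (ξ₂ + s * cos φ)).prodMk
    ((hasDerivAt_const θ (ξ₃ + s * sin φ)).prodMk h4))
  simpa [Pt, op, Prod.smul_mk, smul_eq_mul, mul_zero, mul_neg] using this

lemma pt_path_phi (r s θ φ : ℝ) :
    HasDerivAt (fun φ => Pt ξ₁ ξ₂ ξ₃ ξ₄ r s θ φ) (s • ep φ) φ := by
  have h2 : HasDerivAt (fun φ : ℝ => ξ₂ + s * cos φ) (s * -sin φ) φ :=
    ((Real.hasDerivAt_cos φ).const_mul s).const_add ξ₂
  have h3 : HasDerivAt (fun φ : ℝ => ξ₃ + s * sin φ) (s * cos φ) φ :=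
    ((Real.hasDerivAt_sin φ).const_mul s).const_add ξ₃
  have := (hasDerivAt_const φ (ξ₁ + r * cos θ)).prodMk (h2.prodMk
    (h3.prodMk (hasDerivAt_const φ (ξ₄ + r * sin θ))))
  simpa [Pt, ep, Prod.smul_mk, smul_eq_mul, mul_zero, mul_neg] using this

variable {F}

section Smooth
variable (hF : ContDiff ℝ (⊤ : ℕ∞) F)
include hF

lemma hFd : Differentiable ℝ F := hF.differentiable (by simp)
lemma hF'cd : ContDiff ℝ (⊤ : ℕ∞) (fderiv ℝ F) := hF.fderiv_right (m := (⊤ : ℕ∞)) (by simp)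
lemma hF'c : Continuous (fderiv ℝ F) := (hF'cd hF).continuous
lemma hF'd : Differentiable ℝ (fderiv ℝ F) := (hF'cd hF).differentiable (by simp)
lemma hF''c : Continuous (fderiv ℝ (fderiv ℝ F)) :=
  ((hF'cd hF).fderiv_right (m := (⊤ : ℕ∞)) (by simp)).continuous

lemma capp1 : Continuous fun q : (ℝ × ℝ × ℝ × ℝ) × (ℝ × ℝ × ℝ × ℝ) => D1 F q.1 q.2 :=
  isBoundedBilinearMap_apply.continuous.comp
    (((hF'c hF).comp continuous_fst).prodMk continuous_snd)

lemma capp2 : Continuous fun q : (ℝ × ℝ × ℝ × ℝ) × (ℝ × ℝ × ℝ × ℝ) × (ℝ × ℝ × ℝ × ℝ) =>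
    D2 F q.1 q.2.1 q.2.2 := by
  have h1 : Continuous fun q : (ℝ × ℝ × ℝ × ℝ) × (ℝ × ℝ × ℝ × ℝ) × (ℝ × ℝ × ℝ × ℝ) =>
      fderiv ℝ (fderiv ℝ F) q.1 q.2.1 := isBoundedBilinearMap_apply.continuous.comp
    (((hF''c hF).comp continuous_fst).prodMk (continuous_fst.comp continuous_snd))
  exact isBoundedBilinearMap_apply.continuous.comp
    (h1.prodMk (continuous_snd.comp continuous_snd))

lemma contD1X {X : Type*} [TopologicalSpace X] {G V : X → ℝ × ℝ × ℝ × ℝ}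
    (hG : Continuous G) (hV : Continuous V) :
    Continuous fun x => D1 F (G x) (V x) :=
  (capp1 hF).comp (hG.prodMk hV)

lemma contD2X {X : Type*} [TopologicalSpace X] {G V W : X → ℝ × ℝ × ℝ × ℝ}
    (hG : Continuous G) (hV : Continuous V) (hW : Continuous W) :
    Continuous fun x => D2 F (G x) (V x) (W x) :=
  (capp2 hF).comp (hG.prodMk (hV.prodMk hW))

lemma contFX {X : Type*} [TopologicalSpace X] {G : X → ℝ × ℝ × ℝ × ℝ}
    (hG : Continuous G) : Continuous fun x => F (G x) :=
  hF.continuous.comp hG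

lemma hasDerivAt_F_comp {γ : ℝ → ℝ × ℝ × ℝ × ℝ} {u : ℝ × ℝ × ℝ × ℝ} {t : ℝ}
    (hγ : HasDerivAt γ u t) : HasDerivAt (fun t => F (γ t)) (D1 F (γ t) u) t :=
  ((hFd hF (γ t)).hasFDerivAt).comp_hasDerivAt t hγ

lemma hasDerivAt_D1_comp {γ : ℝ → ℝ × ℝ × ℝ × ℝ} {u : ℝ × ℝ × ℝ × ℝ} {t : ℝ}
    (hγ : HasDerivAt γ u t) (v : ℝ × ℝ × ℝ × ℝ) :
    HasDerivAt (fun t => D1 F (γ t) v) (D2 F (γ t) u v) t := by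
  have h1 : HasFDerivAt (fun y => fderiv ℝ F y v)
      ((ContinuousLinearMap.apply ℝ ℝ v).comp (fderiv ℝ (fderiv ℝ F) (γ t))) (γ t) :=
    (ContinuousLinearMap.apply ℝ ℝ v).hasFDerivAt.comp (γ t) (hF'd hF (γ t)).hasFDerivAt
  have := h1.comp_hasDerivAt t hγ
  simpa [D1, D2, ContinuousLinearMap.comp_apply, ContinuousLinearMap.apply_apply, Function.comp_def] using this

lemma hasDerivAt_clm_comp {γ : ℝ → ℝ × ℝ × ℝ × ℝ} {u : ℝ × ℝ × ℝ × ℝ} {t : ℝ}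
    (hγ : HasDerivAt γ u t) :
    HasDerivAt (fun t => fderiv ℝ F (γ t)) (fderiv ℝ (fderiv ℝ F) (γ t) u) t :=
  ((hF'd hF (γ t)).hasFDerivAt).comp_hasDerivAt t hγ

lemma D2symm (x v w : ℝ × ℝ × ℝ × ℝ) : D2 F x v w = D2 F x w v :=
  second_derivative_symmetric (fun y => ((hFd hF) y).hasFDerivAt)
    ((hF'd hF x).hasFDerivAt) v w

end Smooth
end AsgeirssonAux
noncomputable section AsgeirssonAux2
variable (F : ℝ × ℝ × ℝ × ℝ → ℝ) (ξ₁ ξ₂ ξ₃ ξ₄ : ℝ)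

/-! ### trace identities -/

variable {F}

lemma trace14 (hF : ContDiff ℝ (⊤ : ℕ∞) F) (x : ℝ × ℝ × ℝ × ℝ) (θ : ℝ) :
    D2 F x (ov θ) (ov θ) + D2 F x (op θ) (op θ) = D2 F x VE1 VE1 + D2 F x VE4 VE4 := by
  have hov : ov θ = cos θ • VE1 + sin θ • VE4 := by
    simp [ov, VE1, VE4, Prod.smul_mk, Prod.mk_add_mk]
  have hop : op θ = (-sin θ) • VE1 + cos θ • VE4 := by
    simp [op, VE1, VE4, Prod.smul_mk, Prod.mk_add_mk]
  rw [hov, hop]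
  unfold D2
  simp only [map_add, _root_.map_smul, ContinuousLinearMap.add_apply,
    ContinuousLinearMap.smul_apply, smul_eq_mul]
  linear_combination (fderiv ℝ (fderiv ℝ F) x VE1 VE1
    + fderiv ℝ (fderiv ℝ F) x VE4 VE4) * (sin_sq_add_cos_sq θ)

lemma trace23 (hF : ContDiff ℝ (⊤ : ℕ∞) F) (x : ℝ × ℝ × ℝ × ℝ) (φ : ℝ) :
    D2 F x (ev φ) (ev φ) + D2 F x (ep φ) (ep φ) = D2 F x VE2 VE2 + D2 F x VE3 VE3 := by
  have hev : ev φ = cos φ • VE2 + sin φ • VE3 := by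
    simp [ev, VE2, VE3, Prod.smul_mk, Prod.mk_add_mk]
  have hep : ep φ = (-sin φ) • VE2 + cos φ • VE3 := by
    simp [ep, VE2, VE3, Prod.smul_mk, Prod.mk_add_mk]
  rw [hev, hep]
  unfold D2
  simp only [map_add, _root_.map_smul, ContinuousLinearMap.add_apply,
    ContinuousLinearMap.smul_apply, smul_eq_mul]
  linear_combination (fderiv ℝ (fderiv ℝ F) x VE2 VE2 + fderiv ℝ (fderiv ℝ F) x VE3 VE3)
    * (sin_sq_add_cos_sq φ)

/-- translation of the PDE hypothesis into `D2` form -/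
lemma pde_pt (hF : ContDiff ℝ (⊤ : ℕ∞) F)
    (hpde : ∀ a b c d : ℝ,
      deriv (fun t => deriv (fun s => F (s, b, c, d)) t) a
        + deriv (fun t => deriv (fun s => F (a, b, c, s)) t) d
      = deriv (fun t => deriv (fun s => F (a, s, c, d)) t) b
        + deriv (fun t => deriv (fun s => F (a, b, s, d)) t) c) :
    ∀ x : ℝ × ℝ × ℝ × ℝ,
      D2 F x VE1 VE1 + D2 F x VE4 VE4 = D2 F x VE2 VE2 + D2 F x VE3 VE3 := by
  rintro ⟨a, b, c, d⟩
  have p1 : ∀ t : ℝ, HasDerivAt (fun s : ℝ => ((s, b, c, d) : ℝ × ℝ × ℝ × ℝ)) VE1 t := by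
    intro t
    exact (hasDerivAt_id t).prodMk ((hasDerivAt_const t b).prodMk
      ((hasDerivAt_const t c).prodMk (hasDerivAt_const t d)))
  have p2 : ∀ t : ℝ, HasDerivAt (fun s : ℝ => ((a, s, c, d) : ℝ × ℝ × ℝ × ℝ)) VE2 t := by
    intro t
    exact (hasDerivAt_const t a).prodMk ((hasDerivAt_id t).prodMk
      ((hasDerivAt_const t c).prodMk (hasDerivAt_const t d)))
  have p3 : ∀ t : ℝ, HasDerivAt (fun s : ℝ => ((a, b, s, d) : ℝ × ℝ × ℝ × ℝ)) VE3 t := by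
    intro t
    exact (hasDerivAt_const t a).prodMk ((hasDerivAt_const t b).prodMk
      ((hasDerivAt_id t).prodMk (hasDerivAt_const t d)))
  have p4 : ∀ t : ℝ, HasDerivAt (fun s : ℝ => ((a, b, c, s) : ℝ × ℝ × ℝ × ℝ)) VE4 t := by
    intro t
    exact (hasDerivAt_const t a).prodMk ((hasDerivAt_const t b).prodMk
      ((hasDerivAt_const t c).prodMk (hasDerivAt_id t)))
  have q1 : deriv (fun t => deriv (fun s => F (s, b, c, d)) t) a = D2 F (a,b,c,d) VE1 VE1 := by
    have e : (fun t => deriv (fun s => F (s, b, c, d)) t)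
        = fun t => D1 F (t, b, c, d) VE1 :=
      funext fun t => (hasDerivAt_F_comp hF (p1 t)).deriv
    rw [e]
    exact (hasDerivAt_D1_comp hF (p1 a) VE1).deriv
  have q2 : deriv (fun t => deriv (fun s => F (a, s, c, d)) t) b = D2 F (a,b,c,d) VE2 VE2 := by
    have e : (fun t => deriv (fun s => F (a, s, c, d)) t)
        = fun t => D1 F (a, t, c, d) VE2 :=
      funext fun t => (hasDerivAt_F_comp hF (p2 t)).deriv
    rw [e]
    exact (hasDerivAt_D1_comp hF (p2 b) VE2).deriv
  have q3 : deriv (fun t => deriv (fun s => F (a, b, s, d)) t) c = D2 F (a,b,c,d) VE3 VE3 := by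
    have e : (fun t => deriv (fun s => F (a, b, s, d)) t)
        = fun t => D1 F (a, b, t, d) VE3 :=
      funext fun t => (hasDerivAt_F_comp hF (p3 t)).deriv
    rw [e]
    exact (hasDerivAt_D1_comp hF (p3 c) VE3).deriv
  have q4 : deriv (fun t => deriv (fun s => F (a, b, c, s)) t) d = D2 F (a,b,c,d) VE4 VE4 := by
    have e : (fun t => deriv (fun s => F (a, b, c, s)) t)
        = fun t => D1 F (a, b, c, t) VE4 :=
      funext fun t => (hasDerivAt_F_comp hF (p4 t)).deriv
    rw [e]
    exact (hasDerivAt_D1_comp hF (p4 d) VE4).deriv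
  have := hpde a b c d
  rw [q1, q2, q3, q4] at this
  exact this

end AsgeirssonAux2
noncomputable section AsgeirssonAux3
variable (F : ℝ × ℝ × ℝ × ℝ → ℝ) (ξ₁ ξ₂ ξ₃ ξ₄ : ℝ)

/-! ### the double circle average and its derivatives -/

def gg (r s : ℝ) : ℝ :=
  ∫ θ in (0:ℝ)..(2*π), ∫ φ in (0:ℝ)..(2*π), F (Pt ξ₁ ξ₂ ξ₃ ξ₄ r s θ φ)
def ggr (r s : ℝ) : ℝ :=
  ∫ θ in (0:ℝ)..(2*π), ∫ φ in (0:ℝ)..(2*π), D1 F (Pt ξ₁ ξ₂ ξ₃ ξ₄ r s θ φ) (ov θ)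
def ggs (r s : ℝ) : ℝ :=
  ∫ θ in (0:ℝ)..(2*π), ∫ φ in (0:ℝ)..(2*π), D1 F (Pt ξ₁ ξ₂ ξ₃ ξ₄ r s θ φ) (ev φ)
def ggrr (r s : ℝ) : ℝ :=
  ∫ θ in (0:ℝ)..(2*π), ∫ φ in (0:ℝ)..(2*π), D2 F (Pt ξ₁ ξ₂ ξ₃ ξ₄ r s θ φ) (ov θ) (ov θ)
def ggrs (r s : ℝ) : ℝ :=
  ∫ θ in (0:ℝ)..(2*π), ∫ φ in (0:ℝ)..(2*π), D2 F (Pt ξ₁ ξ₂ ξ₃ ξ₄ r s θ φ) (ev φ) (ov θ)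
def ggsr (r s : ℝ) : ℝ :=
  ∫ θ in (0:ℝ)..(2*π), ∫ φ in (0:ℝ)..(2*π), D2 F (Pt ξ₁ ξ₂ ξ₃ ξ₄ r s θ φ) (ov θ) (ev φ)
def ggss (r s : ℝ) : ℝ :=
  ∫ θ in (0:ℝ)..(2*π), ∫ φ in (0:ℝ)..(2*π), D2 F (Pt ξ₁ ξ₂ ξ₃ ξ₄ r s θ φ) (ev φ) (ev φ)
def LL (r s : ℝ) : ℝ :=
  ∫ θ in (0:ℝ)..(2*π), ∫ φ in (0:ℝ)..(2*π), (D2 F (Pt ξ₁ ξ₂ ξ₃ ξ₄ r s θ φ) VE1 VE1 + D2 F (Pt ξ₁ ξ₂ ξ₃ ξ₄ r s θ φ) VE4 VE4)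
def MM (r s : ℝ) : ℝ :=
  ∫ θ in (0:ℝ)..(2*π), ∫ φ in (0:ℝ)..(2*π), (D2 F (Pt ξ₁ ξ₂ ξ₃ ξ₄ r s θ φ) VE2 VE2 + D2 F (Pt ξ₁ ξ₂ ξ₃ ξ₄ r s θ φ) VE3 VE3)

variable {F}
variable (hF : ContDiff ℝ (⊤ : ℕ∞) F)
include hF

lemma cgg : Continuous fun p : ℝ × ℝ => gg F ξ₁ ξ₂ ξ₃ ξ₄ p.1 p.2 := by
  unfold gg
  apply ddCont
  beta_reduce
  exact contFX hF (by unfold Pt; fun_prop)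

lemma cggr : Continuous fun p : ℝ × ℝ => ggr F ξ₁ ξ₂ ξ₃ ξ₄ p.1 p.2 := by
  unfold ggr
  apply ddCont
  beta_reduce
  exact contD1X hF (by unfold Pt; fun_prop) (by unfold ov; fun_prop)

lemma cggs : Continuous fun p : ℝ × ℝ => ggs F ξ₁ ξ₂ ξ₃ ξ₄ p.1 p.2 := by
  unfold ggs
  apply ddCont
  beta_reduce
  exact contD1X hF (by unfold Pt; fun_prop) (by unfold ev; fun_prop)

lemma cggrr : Continuous fun p : ℝ × ℝ => ggrr F ξ₁ ξ₂ ξ₃ ξ₄ p.1 p.2 := by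
  unfold ggrr
  apply ddCont
  beta_reduce
  exact contD2X hF (by unfold Pt; fun_prop) (by unfold ov; fun_prop) (by unfold ov; fun_prop)

lemma cggrs : Continuous fun p : ℝ × ℝ => ggrs F ξ₁ ξ₂ ξ₃ ξ₄ p.1 p.2 := by
  unfold ggrs
  apply ddCont
  beta_reduce
  exact contD2X hF (by unfold Pt; fun_prop) (by unfold ev; fun_prop) (by unfold ov; fun_prop)

lemma cggsr : Continuous fun p : ℝ × ℝ => ggsr F ξ₁ ξ₂ ξ₃ ξ₄ p.1 p.2 := by
  unfold ggsr
  apply ddCont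
  beta_reduce
  exact contD2X hF (by unfold Pt; fun_prop) (by unfold ov; fun_prop) (by unfold ev; fun_prop)

lemma cggss : Continuous fun p : ℝ × ℝ => ggss F ξ₁ ξ₂ ξ₃ ξ₄ p.1 p.2 := by
  unfold ggss
  apply ddCont
  beta_reduce
  exact contD2X hF (by unfold Pt; fun_prop) (by unfold ev; fun_prop) (by unfold ev; fun_prop)

lemma dgg_r (s r : ℝ) : HasDerivAt (fun r => gg F ξ₁ ξ₂ ξ₃ ξ₄ r s)
    (ggr F ξ₁ ξ₂ ξ₃ ξ₄ r s) r := by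
  unfold gg ggr
  apply ddDeriv (f' := fun (x θ φ : ℝ) => D1 F (Pt ξ₁ ξ₂ ξ₃ ξ₄ x s θ φ) (ov θ)) (x₀ := r)
  · beta_reduce
    exact contFX hF (by unfold Pt; fun_prop)
  · beta_reduce
    exact contD1X hF (by unfold Pt; fun_prop) (by unfold ov; fun_prop)
  · exact fun x θ φ => hasDerivAt_F_comp hF (pt_path_r ξ₁ ξ₂ ξ₃ ξ₄ s θ φ x)

lemma dgg_s (r s : ℝ) : HasDerivAt (fun s => gg F ξ₁ ξ₂ ξ₃ ξ₄ r s)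
    (ggs F ξ₁ ξ₂ ξ₃ ξ₄ r s) s := by
  unfold gg ggs
  apply ddDeriv (f' := fun (x θ φ : ℝ) => D1 F (Pt ξ₁ ξ₂ ξ₃ ξ₄ r x θ φ) (ev φ)) (x₀ := s)
  · beta_reduce
    exact contFX hF (by unfold Pt; fun_prop)
  · beta_reduce
    exact contD1X hF (by unfold Pt; fun_prop) (by unfold ev; fun_prop)
  · exact fun x θ φ => hasDerivAt_F_comp hF (pt_path_s ξ₁ ξ₂ ξ₃ ξ₄ r θ φ x)

lemma dggr_r (s r : ℝ) : HasDerivAt (fun r => ggr F ξ₁ ξ₂ ξ₃ ξ₄ r s)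
    (ggrr F ξ₁ ξ₂ ξ₃ ξ₄ r s) r := by
  unfold ggr ggrr
  apply ddDeriv (f' := fun (x θ φ : ℝ) => D2 F (Pt ξ₁ ξ₂ ξ₃ ξ₄ x s θ φ) (ov θ) (ov θ)) (x₀ := r)
  · beta_reduce
    exact contD1X hF (by unfold Pt; fun_prop) (by unfold ov; fun_prop)
  · beta_reduce
    exact contD2X hF (by unfold Pt; fun_prop) (by unfold ov; fun_prop) (by unfold ov; fun_prop)
  · exact fun x θ φ => hasDerivAt_D1_comp hF (pt_path_r ξ₁ ξ₂ ξ₃ ξ₄ s θ φ x) (ov θ)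

lemma dggr_s (r s : ℝ) : HasDerivAt (fun s => ggr F ξ₁ ξ₂ ξ₃ ξ₄ r s)
    (ggrs F ξ₁ ξ₂ ξ₃ ξ₄ r s) s := by
  unfold ggr ggrs
  apply ddDeriv (f' := fun (x θ φ : ℝ) => D2 F (Pt ξ₁ ξ₂ ξ₃ ξ₄ r x θ φ) (ev φ) (ov θ)) (x₀ := s)
  · beta_reduce
    exact contD1X hF (by unfold Pt; fun_prop) (by unfold ov; fun_prop)
  · beta_reduce
    exact contD2X hF (by unfold Pt; fun_prop) (by unfold ev; fun_prop) (by unfold ov; fun_prop)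
  · exact fun x θ φ => hasDerivAt_D1_comp hF (pt_path_s ξ₁ ξ₂ ξ₃ ξ₄ r θ φ x) (ov θ)

lemma dggs_r (s r : ℝ) : HasDerivAt (fun r => ggs F ξ₁ ξ₂ ξ₃ ξ₄ r s)
    (ggsr F ξ₁ ξ₂ ξ₃ ξ₄ r s) r := by
  unfold ggs ggsr
  apply ddDeriv (f' := fun (x θ φ : ℝ) => D2 F (Pt ξ₁ ξ₂ ξ₃ ξ₄ x s θ φ) (ov θ) (ev φ)) (x₀ := r)
  · beta_reduce
    exact contD1X hF (by unfold Pt; fun_prop) (by unfold ev; fun_prop)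
  · beta_reduce
    exact contD2X hF (by unfold Pt; fun_prop) (by unfold ov; fun_prop) (by unfold ev; fun_prop)
  · exact fun x θ φ => hasDerivAt_D1_comp hF (pt_path_r ξ₁ ξ₂ ξ₃ ξ₄ s θ φ x) (ev φ)

lemma dggs_s (r s : ℝ) : HasDerivAt (fun s => ggs F ξ₁ ξ₂ ξ₃ ξ₄ r s)
    (ggss F ξ₁ ξ₂ ξ₃ ξ₄ r s) s := by
  unfold ggs ggss
  apply ddDeriv (f' := fun (x θ φ : ℝ) => D2 F (Pt ξ₁ ξ₂ ξ₃ ξ₄ r x θ φ) (ev φ) (ev φ)) (x₀ := s)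
  · beta_reduce
    exact contD1X hF (by unfold Pt; fun_prop) (by unfold ev; fun_prop)
  · beta_reduce
    exact contD2X hF (by unfold Pt; fun_prop) (by unfold ev; fun_prop) (by unfold ev; fun_prop)
  · exact fun x θ φ => hasDerivAt_D1_comp hF (pt_path_s ξ₁ ξ₂ ξ₃ ξ₄ r θ φ x) (ev φ)

lemma ggrs_eq_ggsr (r s : ℝ) : ggrs F ξ₁ ξ₂ ξ₃ ξ₄ r s = ggsr F ξ₁ ξ₂ ξ₃ ξ₄ r s := by
  unfold ggrs ggsr
  exact dd_congr fun θ φ => D2symm hF _ _ _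

end AsgeirssonAux3
noncomputable section AsgeirssonAux4
variable {F : ℝ × ℝ × ℝ × ℝ → ℝ} (ξ₁ ξ₂ ξ₃ ξ₄ : ℝ)
variable (hF : ContDiff ℝ (⊤ : ℕ∞) F)
include hF

/-! ### the two integrated Darboux identities -/

lemma Z14 (r s : ℝ) :
    (∫ θ in (0:ℝ)..(2*π), ∫ φ in (0:ℝ)..(2*π),
      (r^2 * D2 F (Pt ξ₁ ξ₂ ξ₃ ξ₄ r s θ φ) (op θ) (op θ)
        - r * D1 F (Pt ξ₁ ξ₂ ξ₃ ξ₄ r s θ φ) (ov θ))) = 0 := by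
  have h2π : (0:ℝ) ≤ 2*π := by positivity
  have hA : Continuous fun p : ℝ × ℝ =>
      r^2 * D2 F (Pt ξ₁ ξ₂ ξ₃ ξ₄ r s p.1 p.2) (op p.1) (op p.1)
        - r * D1 F (Pt ξ₁ ξ₂ ξ₃ ξ₄ r s p.1 p.2) (ov p.1) := by
    apply Continuous.sub
    · exact continuous_const.mul (contD2X hF (by unfold Pt; fun_prop)
        (by unfold op; fun_prop) (by unfold op; fun_prop))
    · exact continuous_const.mul (contD1X hF (by unfold Pt; fun_prop)
        (by unfold ov; fun_prop))
  rw [ddSwap hA h2π h2π]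
  have inner0 : ∀ φ : ℝ, (∫ θ in (0:ℝ)..(2*π),
      (r^2 * D2 F (Pt ξ₁ ξ₂ ξ₃ ξ₄ r s θ φ) (op θ) (op θ)
        - r * D1 F (Pt ξ₁ ξ₂ ξ₃ ξ₄ r s θ φ) (ov θ))) = 0 := by
    intro φ
    have key : ∀ θ : ℝ, HasDerivAt (fun θ => r * D1 F (Pt ξ₁ ξ₂ ξ₃ ξ₄ r s θ φ) (op θ))
        (r^2 * D2 F (Pt ξ₁ ξ₂ ξ₃ ξ₄ r s θ φ) (op θ) (op θ)
          - r * D1 F (Pt ξ₁ ξ₂ ξ₃ ξ₄ r s θ φ) (ov θ)) θ := by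
      intro θ
      have hc := hasDerivAt_clm_comp hF (pt_path_theta ξ₁ ξ₂ ξ₃ ξ₄ r s φ θ)
      have h := (hc.clm_apply (hasDerivAt_op θ)).const_mul r
      refine h.congr_deriv ?_
      simp only [D1, D2, _root_.map_smul, map_neg, ContinuousLinearMap.smul_apply,
        smul_eq_mul, ContinuousLinearMap.neg_apply]
      ring
    have hInt : IntervalIntegrable (fun θ =>
        r^2 * D2 F (Pt ξ₁ ξ₂ ξ₃ ξ₄ r s θ φ) (op θ) (op θ)
          - r * D1 F (Pt ξ₁ ξ₂ ξ₃ ξ₄ r s θ φ) (ov θ)) volume 0 (2*π) := by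
      apply Continuous.intervalIntegrable
      apply Continuous.sub
      · exact continuous_const.mul (contD2X hF (by unfold Pt; fun_prop)
          (by unfold op; fun_prop) (by unfold op; fun_prop))
      · exact continuous_const.mul (contD1X hF (by unfold Pt; fun_prop)
          (by unfold ov; fun_prop))
    rw [intervalIntegral.integral_eq_sub_of_hasDerivAt (fun θ _ => key θ) hInt]
    simp [Pt, op, Real.cos_two_pi, Real.sin_two_pi]
  simp only [inner0, intervalIntegral.integral_zero]

lemma Z23 (r s : ℝ) :
    (∫ θ in (0:ℝ)..(2*π), ∫ φ in (0:ℝ)..(2*π),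
      (s^2 * D2 F (Pt ξ₁ ξ₂ ξ₃ ξ₄ r s θ φ) (ep φ) (ep φ)
        - s * D1 F (Pt ξ₁ ξ₂ ξ₃ ξ₄ r s θ φ) (ev φ))) = 0 := by
  have inner0 : ∀ θ : ℝ, (∫ φ in (0:ℝ)..(2*π),
      (s^2 * D2 F (Pt ξ₁ ξ₂ ξ₃ ξ₄ r s θ φ) (ep φ) (ep φ)
        - s * D1 F (Pt ξ₁ ξ₂ ξ₃ ξ₄ r s θ φ) (ev φ))) = 0 := by
    intro θ
    have key : ∀ φ : ℝ, HasDerivAt (fun φ => s * D1 F (Pt ξ₁ ξ₂ ξ₃ ξ₄ r s θ φ) (ep φ))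
        (s^2 * D2 F (Pt ξ₁ ξ₂ ξ₃ ξ₄ r s θ φ) (ep φ) (ep φ)
          - s * D1 F (Pt ξ₁ ξ₂ ξ₃ ξ₄ r s θ φ) (ev φ)) φ := by
      intro φ
      have hc := hasDerivAt_clm_comp hF (pt_path_phi ξ₁ ξ₂ ξ₃ ξ₄ r s θ φ)
      have h := (hc.clm_apply (hasDerivAt_ep φ)).const_mul s
      refine h.congr_deriv ?_
      simp only [D1, D2, _root_.map_smul, map_neg, ContinuousLinearMap.smul_apply,
        smul_eq_mul, ContinuousLinearMap.neg_apply]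
      ring
    have hInt : IntervalIntegrable (fun φ =>
        s^2 * D2 F (Pt ξ₁ ξ₂ ξ₃ ξ₄ r s θ φ) (ep φ) (ep φ)
          - s * D1 F (Pt ξ₁ ξ₂ ξ₃ ξ₄ r s θ φ) (ev φ)) volume 0 (2*π) := by
      apply Continuous.intervalIntegrable
      apply Continuous.sub
      · exact continuous_const.mul (contD2X hF (by unfold Pt; fun_prop)
          (by unfold ep; fun_prop) (by unfold ep; fun_prop))
      · exact continuous_const.mul (contD1X hF (by unfold Pt; fun_prop)
          (by unfold ev; fun_prop))
    rw [intervalIntegral.integral_eq_sub_of_hasDerivAt (fun φ _ => key φ) hInt]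
    simp [Pt, ep, Real.cos_two_pi, Real.sin_two_pi]
  simp only [inner0, intervalIntegral.integral_zero]

lemma EPDr (r s : ℝ) : r^2 * ggrr F ξ₁ ξ₂ ξ₃ ξ₄ r s + r * ggr F ξ₁ ξ₂ ξ₃ ξ₄ r s
    = r^2 * LL F ξ₁ ξ₂ ξ₃ ξ₄ r s := by
  have cD2ovov : Continuous fun p : ℝ × ℝ =>
      r^2 * D2 F (Pt ξ₁ ξ₂ ξ₃ ξ₄ r s p.1 p.2) (ov p.1) (ov p.1) :=
    continuous_const.mul (contD2X hF (by unfold Pt; fun_prop)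
      (by unfold ov; fun_prop) (by unfold ov; fun_prop))
  have cD1ov : Continuous fun p : ℝ × ℝ =>
      r * D1 F (Pt ξ₁ ξ₂ ξ₃ ξ₄ r s p.1 p.2) (ov p.1) :=
    continuous_const.mul (contD1X hF (by unfold Pt; fun_prop) (by unfold ov; fun_prop))
  have cZint : Continuous fun p : ℝ × ℝ =>
      r^2 * D2 F (Pt ξ₁ ξ₂ ξ₃ ξ₄ r s p.1 p.2) (op p.1) (op p.1)
        - r * D1 F (Pt ξ₁ ξ₂ ξ₃ ξ₄ r s p.1 p.2) (ov p.1) := by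
    apply Continuous.sub
    · exact continuous_const.mul (contD2X hF (by unfold Pt; fun_prop)
        (by unfold op; fun_prop) (by unfold op; fun_prop))
    · exact continuous_const.mul (contD1X hF (by unfold Pt; fun_prop)
        (by unfold ov; fun_prop))
  have cSum : Continuous fun p : ℝ × ℝ =>
      r^2 * D2 F (Pt ξ₁ ξ₂ ξ₃ ξ₄ r s p.1 p.2) (ov p.1) (ov p.1)
        + r * D1 F (Pt ξ₁ ξ₂ ξ₃ ξ₄ r s p.1 p.2) (ov p.1) := cD2ovov.add cD1ov
  unfold ggrr ggr LL
  calc r^2 * (∫ θ in (0:ℝ)..(2*π), ∫ φ in (0:ℝ)..(2*π),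
        D2 F (Pt ξ₁ ξ₂ ξ₃ ξ₄ r s θ φ) (ov θ) (ov θ))
      + r * (∫ θ in (0:ℝ)..(2*π), ∫ φ in (0:ℝ)..(2*π),
        D1 F (Pt ξ₁ ξ₂ ξ₃ ξ₄ r s θ φ) (ov θ))
      = (∫ θ in (0:ℝ)..(2*π), ∫ φ in (0:ℝ)..(2*π),
          r^2 * D2 F (Pt ξ₁ ξ₂ ξ₃ ξ₄ r s θ φ) (ov θ) (ov θ))
        + (∫ θ in (0:ℝ)..(2*π), ∫ φ in (0:ℝ)..(2*π),
          r * D1 F (Pt ξ₁ ξ₂ ξ₃ ξ₄ r s θ φ) (ov θ)) := by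
        simp only [← intervalIntegral.integral_const_mul]
    _ = ∫ θ in (0:ℝ)..(2*π), ∫ φ in (0:ℝ)..(2*π),
          (r^2 * D2 F (Pt ξ₁ ξ₂ ξ₃ ξ₄ r s θ φ) (ov θ) (ov θ)
            + r * D1 F (Pt ξ₁ ξ₂ ξ₃ ξ₄ r s θ φ) (ov θ)) := (dd_add cD2ovov cD1ov).symm
    _ = (∫ θ in (0:ℝ)..(2*π), ∫ φ in (0:ℝ)..(2*π),
          (r^2 * D2 F (Pt ξ₁ ξ₂ ξ₃ ξ₄ r s θ φ) (ov θ) (ov θ)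
            + r * D1 F (Pt ξ₁ ξ₂ ξ₃ ξ₄ r s θ φ) (ov θ)))
        + (∫ θ in (0:ℝ)..(2*π), ∫ φ in (0:ℝ)..(2*π),
          (r^2 * D2 F (Pt ξ₁ ξ₂ ξ₃ ξ₄ r s θ φ) (op θ) (op θ)
            - r * D1 F (Pt ξ₁ ξ₂ ξ₃ ξ₄ r s θ φ) (ov θ))) := by
        rw [Z14 ξ₁ ξ₂ ξ₃ ξ₄ hF r s, add_zero]
    _ = ∫ θ in (0:ℝ)..(2*π), ∫ φ in (0:ℝ)..(2*π),
          ((r^2 * D2 F (Pt ξ₁ ξ₂ ξ₃ ξ₄ r s θ φ) (ov θ) (ov θ)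
            + r * D1 F (Pt ξ₁ ξ₂ ξ₃ ξ₄ r s θ φ) (ov θ))
          + (r^2 * D2 F (Pt ξ₁ ξ₂ ξ₃ ξ₄ r s θ φ) (op θ) (op θ)
            - r * D1 F (Pt ξ₁ ξ₂ ξ₃ ξ₄ r s θ φ) (ov θ))) := (dd_add cSum cZint).symm
    _ = ∫ θ in (0:ℝ)..(2*π), ∫ φ in (0:ℝ)..(2*π),
          (r^2 * (D2 F (Pt ξ₁ ξ₂ ξ₃ ξ₄ r s θ φ) VE1 VE1
            + D2 F (Pt ξ₁ ξ₂ ξ₃ ξ₄ r s θ φ) VE4 VE4)) := by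
        apply dd_congr
        intro θ φ
        linear_combination (r^2) * trace14 hF (Pt ξ₁ ξ₂ ξ₃ ξ₄ r s θ φ) θ
    _ = r^2 * ∫ θ in (0:ℝ)..(2*π), ∫ φ in (0:ℝ)..(2*π),
          (D2 F (Pt ξ₁ ξ₂ ξ₃ ξ₄ r s θ φ) VE1 VE1
            + D2 F (Pt ξ₁ ξ₂ ξ₃ ξ₄ r s θ φ) VE4 VE4) := by
        simp only [intervalIntegral.integral_const_mul]

lemma EPDs (r s : ℝ) : s^2 * ggss F ξ₁ ξ₂ ξ₃ ξ₄ r s + s * ggs F ξ₁ ξ₂ ξ₃ ξ₄ r s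
    = s^2 * MM F ξ₁ ξ₂ ξ₃ ξ₄ r s := by
  have cD2evev : Continuous fun p : ℝ × ℝ =>
      s^2 * D2 F (Pt ξ₁ ξ₂ ξ₃ ξ₄ r s p.1 p.2) (ev p.2) (ev p.2) :=
    continuous_const.mul (contD2X hF (by unfold Pt; fun_prop)
      (by unfold ev; fun_prop) (by unfold ev; fun_prop))
  have cD1ev : Continuous fun p : ℝ × ℝ =>
      s * D1 F (Pt ξ₁ ξ₂ ξ₃ ξ₄ r s p.1 p.2) (ev p.2) :=
    continuous_const.mul (contD1X hF (by unfold Pt; fun_prop) (by unfold ev; fun_prop))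
  have cZint : Continuous fun p : ℝ × ℝ =>
      s^2 * D2 F (Pt ξ₁ ξ₂ ξ₃ ξ₄ r s p.1 p.2) (ep p.2) (ep p.2)
        - s * D1 F (Pt ξ₁ ξ₂ ξ₃ ξ₄ r s p.1 p.2) (ev p.2) := by
    apply Continuous.sub
    · exact continuous_const.mul (contD2X hF (by unfold Pt; fun_prop)
        (by unfold ep; fun_prop) (by unfold ep; fun_prop))
    · exact continuous_const.mul (contD1X hF (by unfold Pt; fun_prop)
        (by unfold ev; fun_prop))
  have cSum : Continuous fun p : ℝ × ℝ =>
      s^2 * D2 F (Pt ξ₁ ξ₂ ξ₃ ξ₄ r s p.1 p.2) (ev p.2) (ev p.2)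
        + s * D1 F (Pt ξ₁ ξ₂ ξ₃ ξ₄ r s p.1 p.2) (ev p.2) := cD2evev.add cD1ev
  unfold ggss ggs MM
  calc s^2 * (∫ θ in (0:ℝ)..(2*π), ∫ φ in (0:ℝ)..(2*π),
        D2 F (Pt ξ₁ ξ₂ ξ₃ ξ₄ r s θ φ) (ev φ) (ev φ))
      + s * (∫ θ in (0:ℝ)..(2*π), ∫ φ in (0:ℝ)..(2*π),
        D1 F (Pt ξ₁ ξ₂ ξ₃ ξ₄ r s θ φ) (ev φ))
      = (∫ θ in (0:ℝ)..(2*π), ∫ φ in (0:ℝ)..(2*π),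
          s^2 * D2 F (Pt ξ₁ ξ₂ ξ₃ ξ₄ r s θ φ) (ev φ) (ev φ))
        + (∫ θ in (0:ℝ)..(2*π), ∫ φ in (0:ℝ)..(2*π),
          s * D1 F (Pt ξ₁ ξ₂ ξ₃ ξ₄ r s θ φ) (ev φ)) := by
        simp only [← intervalIntegral.integral_const_mul]
    _ = ∫ θ in (0:ℝ)..(2*π), ∫ φ in (0:ℝ)..(2*π),
          (s^2 * D2 F (Pt ξ₁ ξ₂ ξ₃ ξ₄ r s θ φ) (ev φ) (ev φ)
            + s * D1 F (Pt ξ₁ ξ₂ ξ₃ ξ₄ r s θ φ) (ev φ)) := (dd_add cD2evev cD1ev).symm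
    _ = (∫ θ in (0:ℝ)..(2*π), ∫ φ in (0:ℝ)..(2*π),
          (s^2 * D2 F (Pt ξ₁ ξ₂ ξ₃ ξ₄ r s θ φ) (ev φ) (ev φ)
            + s * D1 F (Pt ξ₁ ξ₂ ξ₃ ξ₄ r s θ φ) (ev φ)))
        + (∫ θ in (0:ℝ)..(2*π), ∫ φ in (0:ℝ)..(2*π),
          (s^2 * D2 F (Pt ξ₁ ξ₂ ξ₃ ξ₄ r s θ φ) (ep φ) (ep φ)
            - s * D1 F (Pt ξ₁ ξ₂ ξ₃ ξ₄ r s θ φ) (ev φ))) := by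
        rw [Z23 ξ₁ ξ₂ ξ₃ ξ₄ hF r s, add_zero]
    _ = ∫ θ in (0:ℝ)..(2*π), ∫ φ in (0:ℝ)..(2*π),
          ((s^2 * D2 F (Pt ξ₁ ξ₂ ξ₃ ξ₄ r s θ φ) (ev φ) (ev φ)
            + s * D1 F (Pt ξ₁ ξ₂ ξ₃ ξ₄ r s θ φ) (ev φ))
          + (s^2 * D2 F (Pt ξ₁ ξ₂ ξ₃ ξ₄ r s θ φ) (ep φ) (ep φ)
            - s * D1 F (Pt ξ₁ ξ₂ ξ₃ ξ₄ r s θ φ) (ev φ))) := (dd_add cSum cZint).symm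
    _ = ∫ θ in (0:ℝ)..(2*π), ∫ φ in (0:ℝ)..(2*π),
          (s^2 * (D2 F (Pt ξ₁ ξ₂ ξ₃ ξ₄ r s θ φ) VE2 VE2
            + D2 F (Pt ξ₁ ξ₂ ξ₃ ξ₄ r s θ φ) VE3 VE3)) := by
        apply dd_congr
        intro θ φ
        linear_combination (s^2) * trace23 hF (Pt ξ₁ ξ₂ ξ₃ ξ₄ r s θ φ) φ
    _ = s^2 * ∫ θ in (0:ℝ)..(2*π), ∫ φ in (0:ℝ)..(2*π),
          (D2 F (Pt ξ₁ ξ₂ ξ₃ ξ₄ r s θ φ) VE2 VE2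
            + D2 F (Pt ξ₁ ξ₂ ξ₃ ξ₄ r s θ φ) VE3 VE3) := by
        simp only [intervalIntegral.integral_const_mul]

lemma keyEPD
    (hLap : ∀ x : ℝ × ℝ × ℝ × ℝ,
      D2 F x VE1 VE1 + D2 F x VE4 VE4 = D2 F x VE2 VE2 + D2 F x VE3 VE3)
    (r s : ℝ) :
    s^2 * (r^2 * ggrr F ξ₁ ξ₂ ξ₃ ξ₄ r s + r * ggr F ξ₁ ξ₂ ξ₃ ξ₄ r s)
      = r^2 * (s^2 * ggss F ξ₁ ξ₂ ξ₃ ξ₄ r s + s * ggs F ξ₁ ξ₂ ξ₃ ξ₄ r s) := by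
  have hLM : LL F ξ₁ ξ₂ ξ₃ ξ₄ r s = MM F ξ₁ ξ₂ ξ₃ ξ₄ r s := by
    unfold LL MM
    exact dd_congr fun θ φ => hLap _
  rw [EPDr ξ₁ ξ₂ ξ₃ ξ₄ hF r s, EPDs ξ₁ ξ₂ ξ₃ ξ₄ hF r s, hLM]
  ring

end AsgeirssonAux4
noncomputable section AsgeirssonAux5
variable (F : ℝ × ℝ × ℝ × ℝ → ℝ) (ξ₁ ξ₂ ξ₃ ξ₄ : ℝ)

/-! ### the antisymmetrised average and the energy -/

def uu (r s : ℝ) : ℝ := gg F ξ₁ ξ₂ ξ₃ ξ₄ r s - gg F ξ₁ ξ₂ ξ₃ ξ₄ s r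
def uur (r s : ℝ) : ℝ := ggr F ξ₁ ξ₂ ξ₃ ξ₄ r s - ggs F ξ₁ ξ₂ ξ₃ ξ₄ s r
def uus (r s : ℝ) : ℝ := ggs F ξ₁ ξ₂ ξ₃ ξ₄ r s - ggr F ξ₁ ξ₂ ξ₃ ξ₄ s r
def uurr (r s : ℝ) : ℝ := ggrr F ξ₁ ξ₂ ξ₃ ξ₄ r s - ggss F ξ₁ ξ₂ ξ₃ ξ₄ s r
def uuss (r s : ℝ) : ℝ := ggss F ξ₁ ξ₂ ξ₃ ξ₄ r s - ggrr F ξ₁ ξ₂ ξ₃ ξ₄ s r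
def uurs (r s : ℝ) : ℝ := ggrs F ξ₁ ξ₂ ξ₃ ξ₄ r s - ggsr F ξ₁ ξ₂ ξ₃ ξ₄ s r
def ee (r s : ℝ) : ℝ := s * ((uur F ξ₁ ξ₂ ξ₃ ξ₄ r s)^2 + (uus F ξ₁ ξ₂ ξ₃ ξ₄ r s)^2)
def er2 (r s : ℝ) : ℝ := s * (2 * uur F ξ₁ ξ₂ ξ₃ ξ₄ r s * uurr F ξ₁ ξ₂ ξ₃ ξ₄ r s
  + 2 * uus F ξ₁ ξ₂ ξ₃ ξ₄ r s * uurs F ξ₁ ξ₂ ξ₃ ξ₄ r s)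
def EE (r : ℝ) : ℝ := ∫ s in (0:ℝ)..r, ee F ξ₁ ξ₂ ξ₃ ξ₄ r s

variable {F}
variable (hF : ContDiff ℝ (⊤ : ℕ∞) F)
include hF

lemma cuu : Continuous fun p : ℝ × ℝ => uu F ξ₁ ξ₂ ξ₃ ξ₄ p.1 p.2 := by
  unfold uu
  exact (cgg ξ₁ ξ₂ ξ₃ ξ₄ hF).sub ((cgg ξ₁ ξ₂ ξ₃ ξ₄ hF).comp continuous_swap)

lemma cuur : Continuous fun p : ℝ × ℝ => uur F ξ₁ ξ₂ ξ₃ ξ₄ p.1 p.2 := by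
  unfold uur
  exact (cggr ξ₁ ξ₂ ξ₃ ξ₄ hF).sub ((cggs ξ₁ ξ₂ ξ₃ ξ₄ hF).comp continuous_swap)

lemma cuus : Continuous fun p : ℝ × ℝ => uus F ξ₁ ξ₂ ξ₃ ξ₄ p.1 p.2 := by
  unfold uus
  exact (cggs ξ₁ ξ₂ ξ₃ ξ₄ hF).sub ((cggr ξ₁ ξ₂ ξ₃ ξ₄ hF).comp continuous_swap)

lemma cuurr : Continuous fun p : ℝ × ℝ => uurr F ξ₁ ξ₂ ξ₃ ξ₄ p.1 p.2 := by
  unfold uurr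
  exact (cggrr ξ₁ ξ₂ ξ₃ ξ₄ hF).sub ((cggss ξ₁ ξ₂ ξ₃ ξ₄ hF).comp continuous_swap)

lemma cuuss : Continuous fun p : ℝ × ℝ => uuss F ξ₁ ξ₂ ξ₃ ξ₄ p.1 p.2 := by
  unfold uuss
  exact (cggss ξ₁ ξ₂ ξ₃ ξ₄ hF).sub ((cggrr ξ₁ ξ₂ ξ₃ ξ₄ hF).comp continuous_swap)

lemma cuurs : Continuous fun p : ℝ × ℝ => uurs F ξ₁ ξ₂ ξ₃ ξ₄ p.1 p.2 := by
  unfold uurs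
  exact (cggrs ξ₁ ξ₂ ξ₃ ξ₄ hF).sub ((cggsr ξ₁ ξ₂ ξ₃ ξ₄ hF).comp continuous_swap)

lemma cee2 : Continuous fun p : ℝ × ℝ => ee F ξ₁ ξ₂ ξ₃ ξ₄ p.1 p.2 := by
  unfold ee
  exact continuous_snd.mul (((cuur ξ₁ ξ₂ ξ₃ ξ₄ hF).pow 2).add ((cuus ξ₁ ξ₂ ξ₃ ξ₄ hF).pow 2))

lemma cer2 : Continuous fun p : ℝ × ℝ => er2 F ξ₁ ξ₂ ξ₃ ξ₄ p.1 p.2 := by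
  unfold er2
  exact continuous_snd.mul
    (((continuous_const.mul (cuur ξ₁ ξ₂ ξ₃ ξ₄ hF)).mul (cuurr ξ₁ ξ₂ ξ₃ ξ₄ hF)).add
     ((continuous_const.mul (cuus ξ₁ ξ₂ ξ₃ ξ₄ hF)).mul (cuurs ξ₁ ξ₂ ξ₃ ξ₄ hF)))

lemma duu_r (s r : ℝ) : HasDerivAt (fun r => uu F ξ₁ ξ₂ ξ₃ ξ₄ r s)
    (uur F ξ₁ ξ₂ ξ₃ ξ₄ r s) r := by
  unfold uu uur
  exact (dgg_r ξ₁ ξ₂ ξ₃ ξ₄ hF s r).sub (dgg_s ξ₁ ξ₂ ξ₃ ξ₄ hF s r)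

lemma duu_s (r s : ℝ) : HasDerivAt (fun s => uu F ξ₁ ξ₂ ξ₃ ξ₄ r s)
    (uus F ξ₁ ξ₂ ξ₃ ξ₄ r s) s := by
  unfold uu uus
  exact (dgg_s ξ₁ ξ₂ ξ₃ ξ₄ hF r s).sub (dgg_r ξ₁ ξ₂ ξ₃ ξ₄ hF r s)

lemma duur_r (s r : ℝ) : HasDerivAt (fun r => uur F ξ₁ ξ₂ ξ₃ ξ₄ r s)
    (uurr F ξ₁ ξ₂ ξ₃ ξ₄ r s) r := by
  unfold uur uurr
  exact (dggr_r ξ₁ ξ₂ ξ₃ ξ₄ hF s r).sub (dggs_s ξ₁ ξ₂ ξ₃ ξ₄ hF s r)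

lemma duur_s (r s : ℝ) : HasDerivAt (fun s => uur F ξ₁ ξ₂ ξ₃ ξ₄ r s)
    (uurs F ξ₁ ξ₂ ξ₃ ξ₄ r s) s := by
  unfold uur uurs
  exact (dggr_s ξ₁ ξ₂ ξ₃ ξ₄ hF r s).sub (dggs_r ξ₁ ξ₂ ξ₃ ξ₄ hF r s)

lemma duus_r (s r : ℝ) : HasDerivAt (fun r => uus F ξ₁ ξ₂ ξ₃ ξ₄ r s)
    (uurs F ξ₁ ξ₂ ξ₃ ξ₄ r s) r := by
  unfold uus uurs
  have h := (dggs_r ξ₁ ξ₂ ξ₃ ξ₄ hF s r).sub (dggr_s ξ₁ ξ₂ ξ₃ ξ₄ hF s r)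
  have e : ggsr F ξ₁ ξ₂ ξ₃ ξ₄ r s - ggrs F ξ₁ ξ₂ ξ₃ ξ₄ s r
      = ggrs F ξ₁ ξ₂ ξ₃ ξ₄ r s - ggsr F ξ₁ ξ₂ ξ₃ ξ₄ s r := by
    rw [ggrs_eq_ggsr ξ₁ ξ₂ ξ₃ ξ₄ hF r s, ggrs_eq_ggsr ξ₁ ξ₂ ξ₃ ξ₄ hF s r]
  exact e ▸ h

lemma duus_s (r s : ℝ) : HasDerivAt (fun s => uus F ξ₁ ξ₂ ξ₃ ξ₄ r s)
    (uuss F ξ₁ ξ₂ ξ₃ ξ₄ r s) s := by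
  unfold uus uuss
  exact (dggs_s ξ₁ ξ₂ ξ₃ ξ₄ hF r s).sub (dggr_r ξ₁ ξ₂ ξ₃ ξ₄ hF r s)

lemma epdw
    (hLap : ∀ x : ℝ × ℝ × ℝ × ℝ,
      D2 F x VE1 VE1 + D2 F x VE4 VE4 = D2 F x VE2 VE2 + D2 F x VE3 VE3)
    {r s : ℝ} (hr : 0 < r) (hs : 0 < s) :
    r * (s * uurr F ξ₁ ξ₂ ξ₃ ξ₄ r s) + s * uur F ξ₁ ξ₂ ξ₃ ξ₄ r s
      = r * (s * uuss F ξ₁ ξ₂ ξ₃ ξ₄ r s) + r * uus F ξ₁ ξ₂ ξ₃ ξ₄ r s := by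
  have k1 := keyEPD ξ₁ ξ₂ ξ₃ ξ₄ hF hLap r s
  have k2 := keyEPD ξ₁ ξ₂ ξ₃ ξ₄ hF hLap s r
  have h : (r*s) * (r * (s * uurr F ξ₁ ξ₂ ξ₃ ξ₄ r s) + s * uur F ξ₁ ξ₂ ξ₃ ξ₄ r s)
      = (r*s) * (r * (s * uuss F ξ₁ ξ₂ ξ₃ ξ₄ r s) + r * uus F ξ₁ ξ₂ ξ₃ ξ₄ r s) := by
    unfold uurr uur uuss uus
    linear_combination k1 + k2
  exact mul_left_cancel₀ (by positivity) h

lemma dee_param (x t : ℝ) : HasDerivAt (fun y => ee F ξ₁ ξ₂ ξ₃ ξ₄ y t)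
    (er2 F ξ₁ ξ₂ ξ₃ ξ₄ x t) x := by
  have h1 := duur_r ξ₁ ξ₂ ξ₃ ξ₄ hF t x
  have h2 := duus_r ξ₁ ξ₂ ξ₃ ξ₄ hF t x
  have h := ((h1.pow 2).add (h2.pow 2)).const_mul t
  unfold ee er2
  refine h.congr_deriv ?_
  push_cast
  ring

lemma dEE (r₀ : ℝ) : HasDerivAt (EE F ξ₁ ξ₂ ξ₃ ξ₄)
    (ee F ξ₁ ξ₂ ξ₃ ξ₄ r₀ r₀ + ∫ s in (0:ℝ)..r₀, er2 F ξ₁ ξ₂ ξ₃ ξ₄ r₀ s) r₀ := by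
  have ceeC := cee2 ξ₁ ξ₂ ξ₃ ξ₄ hF
  have hIeex : ∀ (x a b : ℝ), IntervalIntegrable (fun t => ee F ξ₁ ξ₂ ξ₃ ξ₄ x t) volume a b :=
    fun x a b => (ceeC.comp (by fun_prop : Continuous fun t : ℝ => (x, t))).intervalIntegrable a b
  have hsplit : EE F ξ₁ ξ₂ ξ₃ ξ₄ = fun x => (∫ t in (0:ℝ)..r₀, ee F ξ₁ ξ₂ ξ₃ ξ₄ x t)
      + ∫ t in r₀..x, ee F ξ₁ ξ₂ ξ₃ ξ₄ x t := by
    funext x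
    unfold EE
    rw [intervalIntegral.integral_add_adjacent_intervals (hIeex x 0 r₀) (hIeex x r₀ x)]
  have hA : HasDerivAt (fun x => ∫ t in (0:ℝ)..r₀, ee F ξ₁ ξ₂ ξ₃ ξ₄ x t)
      (∫ s in (0:ℝ)..r₀, er2 F ξ₁ ξ₂ ξ₃ ξ₄ r₀ s) r₀ := by
    exact derivParam (f := fun x t => ee F ξ₁ ξ₂ ξ₃ ξ₄ x t)
      (f' := fun x t => er2 F ξ₁ ξ₂ ξ₃ ξ₄ x t) ceeC (cer2 ξ₁ ξ₂ ξ₃ ξ₄ hF)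
      (fun x t => dee_param ξ₁ ξ₂ ξ₃ ξ₄ hF x t) r₀
  have hB : HasDerivAt (fun x => ∫ t in r₀..x, ee F ξ₁ ξ₂ ξ₃ ξ₄ x t)
      (ee F ξ₁ ξ₂ ξ₃ ξ₄ r₀ r₀) r₀ := by
    rw [hasDerivAt_iff_isLittleO, Asymptotics.isLittleO_iff]
    intro ε hε
    obtain ⟨δ, hδ, hδ'⟩ := Metric.continuousAt_iff.mp ceeC.continuousAt ε hε
    filter_upwards [Metric.ball_mem_nhds r₀ hδ] with x hx
    have hbound : ∀ t ∈ Set.uIoc r₀ x,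
        ‖ee F ξ₁ ξ₂ ξ₃ ξ₄ x t - ee F ξ₁ ξ₂ ξ₃ ξ₄ r₀ r₀‖ ≤ ε := by
      intro t ht
      have htd : |t - r₀| ≤ |x - r₀| := by
        rcases le_total r₀ x with h | h
        · rw [Set.uIoc_of_le h] at ht
          rw [abs_of_nonneg (by linarith [ht.1.le] : (0:ℝ) ≤ t - r₀),
            abs_of_nonneg (by linarith : (0:ℝ) ≤ x - r₀)]
          linarith [ht.2]
        · rw [Set.uIoc_comm, Set.uIoc_of_le h] at ht
          rw [abs_of_nonpos (by linarith [ht.2] : t - r₀ ≤ 0),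
            abs_of_nonpos (by linarith : x - r₀ ≤ 0)]
          linarith [ht.1]
      have hdist : dist ((x, t) : ℝ × ℝ) (r₀, r₀) < δ := by
        rw [Prod.dist_eq]
        have h1 : dist x r₀ < δ := hx
        have h2 : dist t r₀ < δ := by
          rw [Real.dist_eq]
          calc |t - r₀| ≤ |x - r₀| := htd
            _ < δ := by rw [Real.dist_eq] at h1; exact h1
        exact max_lt h1 h2
      have := hδ' hdist
      rw [Real.dist_eq] at this
      exact le_of_lt this
    have hint1 : IntervalIntegrable (fun t => ee F ξ₁ ξ₂ ξ₃ ξ₄ x t) volume r₀ x :=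
      (ceeC.comp (by fun_prop : Continuous fun t : ℝ => (x, t))).intervalIntegrable r₀ x
    have key : (∫ t in r₀..x, ee F ξ₁ ξ₂ ξ₃ ξ₄ x t) - (x - r₀) • ee F ξ₁ ξ₂ ξ₃ ξ₄ r₀ r₀
        = ∫ t in r₀..x, (ee F ξ₁ ξ₂ ξ₃ ξ₄ x t - ee F ξ₁ ξ₂ ξ₃ ξ₄ r₀ r₀) := by
      rw [intervalIntegral.integral_sub hint1 intervalIntegrable_const,
        intervalIntegral.integral_const]
    have hnorm := intervalIntegral.norm_integral_le_of_norm_le_const hbound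
    simp only [intervalIntegral.integral_same, sub_zero]
    rw [key]
    calc ‖∫ t in r₀..x, (ee F ξ₁ ξ₂ ξ₃ ξ₄ x t - ee F ξ₁ ξ₂ ξ₃ ξ₄ r₀ r₀)‖
        ≤ ε * |x - r₀| := hnorm
      _ = ε * ‖x - r₀‖ := by rw [Real.norm_eq_abs]
  rw [hsplit]
  have := hA.add hB
  rwa [add_comm (∫ s in (0:ℝ)..r₀, er2 F ξ₁ ξ₂ ξ₃ ξ₄ r₀ s)] at this

lemma dEEval
    (hLap : ∀ x : ℝ × ℝ × ℝ × ℝ,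
      D2 F x VE1 VE1 + D2 F x VE4 VE4 = D2 F x VE2 VE2 + D2 F x VE3 VE3)
    {r : ℝ} (hr : 0 < r) :
    ee F ξ₁ ξ₂ ξ₃ ξ₄ r r + (∫ s in (0:ℝ)..r, er2 F ξ₁ ξ₂ ξ₃ ξ₄ r s)
      = - ((2/r) * ∫ s in (0:ℝ)..r, s * (uur F ξ₁ ξ₂ ξ₃ ξ₄ r s)^2) := by
  have c1 : Continuous fun s => uur F ξ₁ ξ₂ ξ₃ ξ₄ r s :=
    by have h := cuur ξ₁ ξ₂ ξ₃ ξ₄ hF; fun_prop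
  have c2 : Continuous fun s => uus F ξ₁ ξ₂ ξ₃ ξ₄ r s :=
    by have h := cuus ξ₁ ξ₂ ξ₃ ξ₄ hF; fun_prop
  have c3 : Continuous fun s => uuss F ξ₁ ξ₂ ξ₃ ξ₄ r s :=
    by have h := cuuss ξ₁ ξ₂ ξ₃ ξ₄ hF; fun_prop
  have c4 : Continuous fun s => uurs F ξ₁ ξ₂ ξ₃ ξ₄ r s :=
    by have h := cuurs ξ₁ ξ₂ ξ₃ ξ₄ hF; fun_prop
  have hΦ : ∀ s : ℝ, HasDerivAt (fun s => 2 * s * uus F ξ₁ ξ₂ ξ₃ ξ₄ r s * uur F ξ₁ ξ₂ ξ₃ ξ₄ r s)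
      (2 * uus F ξ₁ ξ₂ ξ₃ ξ₄ r s * uur F ξ₁ ξ₂ ξ₃ ξ₄ r s
        + 2 * s * uuss F ξ₁ ξ₂ ξ₃ ξ₄ r s * uur F ξ₁ ξ₂ ξ₃ ξ₄ r s
        + 2 * s * uus F ξ₁ ξ₂ ξ₃ ξ₄ r s * uurs F ξ₁ ξ₂ ξ₃ ξ₄ r s) s := by
    intro s
    have h2s : HasDerivAt (fun s : ℝ => 2 * s) 2 s := by
      simpa using (hasDerivAt_id s).const_mul 2
    have h := (h2s.mul (duus_s ξ₁ ξ₂ ξ₃ ξ₄ hF r s)).mul (duur_s ξ₁ ξ₂ ξ₃ ξ₄ hF r s)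
    refine h.congr_deriv ?_
    simp only [Pi.mul_apply]
    ring
  have hptw : ∀ s ∈ Set.uIoc (0:ℝ) r, er2 F ξ₁ ξ₂ ξ₃ ξ₄ r s
      = (2 * uus F ξ₁ ξ₂ ξ₃ ξ₄ r s * uur F ξ₁ ξ₂ ξ₃ ξ₄ r s
        + 2 * s * uuss F ξ₁ ξ₂ ξ₃ ξ₄ r s * uur F ξ₁ ξ₂ ξ₃ ξ₄ r s
        + 2 * s * uus F ξ₁ ξ₂ ξ₃ ξ₄ r s * uurs F ξ₁ ξ₂ ξ₃ ξ₄ r s)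
        - (2/r) * (s * (uur F ξ₁ ξ₂ ξ₃ ξ₄ r s)^2) := by
    intro s hs
    rw [Set.uIoc_of_le hr.le] at hs
    have hs0 : 0 < s := hs.1
    have hW := epdw ξ₁ ξ₂ ξ₃ ξ₄ hF hLap hr hs0
    have hrne : r ≠ 0 := hr.ne'
    unfold er2
    field_simp
    linear_combination (uur F ξ₁ ξ₂ ξ₃ ξ₄ r s) * hW
  have hIΦ : IntervalIntegrable (fun s => 2 * uus F ξ₁ ξ₂ ξ₃ ξ₄ r s * uur F ξ₁ ξ₂ ξ₃ ξ₄ r s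
      + 2 * s * uuss F ξ₁ ξ₂ ξ₃ ξ₄ r s * uur F ξ₁ ξ₂ ξ₃ ξ₄ r s
      + 2 * s * uus F ξ₁ ξ₂ ξ₃ ξ₄ r s * uurs F ξ₁ ξ₂ ξ₃ ξ₄ r s) volume 0 r := by
    apply Continuous.intervalIntegrable
    fun_prop
  have hIq : IntervalIntegrable (fun s => (2/r) * (s * (uur F ξ₁ ξ₂ ξ₃ ξ₄ r s)^2)) volume 0 r := by
    apply Continuous.intervalIntegrable
    fun_prop
  have h1 : (∫ s in (0:ℝ)..r, er2 F ξ₁ ξ₂ ξ₃ ξ₄ r s)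
      = (∫ s in (0:ℝ)..r, (2 * uus F ξ₁ ξ₂ ξ₃ ξ₄ r s * uur F ξ₁ ξ₂ ξ₃ ξ₄ r s
        + 2 * s * uuss F ξ₁ ξ₂ ξ₃ ξ₄ r s * uur F ξ₁ ξ₂ ξ₃ ξ₄ r s
        + 2 * s * uus F ξ₁ ξ₂ ξ₃ ξ₄ r s * uurs F ξ₁ ξ₂ ξ₃ ξ₄ r s))
        - ∫ s in (0:ℝ)..r, (2/r) * (s * (uur F ξ₁ ξ₂ ξ₃ ξ₄ r s)^2) := by
    rw [← intervalIntegral.integral_sub hIΦ hIq]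
    exact intervalIntegral.integral_congr_ae (Filter.Eventually.of_forall hptw)
  have h2 : (∫ s in (0:ℝ)..r, (2 * uus F ξ₁ ξ₂ ξ₃ ξ₄ r s * uur F ξ₁ ξ₂ ξ₃ ξ₄ r s
      + 2 * s * uuss F ξ₁ ξ₂ ξ₃ ξ₄ r s * uur F ξ₁ ξ₂ ξ₃ ξ₄ r s
      + 2 * s * uus F ξ₁ ξ₂ ξ₃ ξ₄ r s * uurs F ξ₁ ξ₂ ξ₃ ξ₄ r s))
      = 2 * r * uus F ξ₁ ξ₂ ξ₃ ξ₄ r r * uur F ξ₁ ξ₂ ξ₃ ξ₄ r r := by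
    rw [intervalIntegral.integral_eq_sub_of_hasDerivAt (fun s _ => hΦ s) hIΦ]
    simp
  have h3 : (∫ s in (0:ℝ)..r, (2/r) * (s * (uur F ξ₁ ξ₂ ξ₃ ξ₄ r s)^2))
      = (2/r) * ∫ s in (0:ℝ)..r, s * (uur F ξ₁ ξ₂ ξ₃ ξ₄ r s)^2 :=
    intervalIntegral.integral_const_mul _ _
  rw [h1, h2, h3]
  have hdiag : uur F ξ₁ ξ₂ ξ₃ ξ₄ r r + uus F ξ₁ ξ₂ ξ₃ ξ₄ r r = 0 := by
    unfold uur uus; ring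
  unfold ee
  linear_combination (r * (uur F ξ₁ ξ₂ ξ₃ ξ₄ r r + uus F ξ₁ ξ₂ ξ₃ ξ₄ r r)) * hdiag

end AsgeirssonAux5
noncomputable section AsgeirssonAux6
variable {F : ℝ × ℝ × ℝ × ℝ → ℝ} (ξ₁ ξ₂ ξ₃ ξ₄ : ℝ)
variable (hF : ContDiff ℝ (⊤ : ℕ∞) F)
  (hLap : ∀ x : ℝ × ℝ × ℝ × ℝ,
    D2 F x VE1 VE1 + D2 F x VE4 VE4 = D2 F x VE2 VE2 + D2 F x VE3 VE3)
include hF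

lemma EEcont : Continuous (EE F ξ₁ ξ₂ ξ₃ ξ₄) := by
  unfold EE
  exact intervalIntegral.continuous_parametric_intervalIntegral_of_continuous
    (f := fun x t => ee F ξ₁ ξ₂ ξ₃ ξ₄ x t) (cee2 ξ₁ ξ₂ ξ₃ ξ₄ hF) continuous_id

lemma EEnonneg {r : ℝ} (hr : 0 ≤ r) : 0 ≤ EE F ξ₁ ξ₂ ξ₃ ξ₄ r := by
  unfold EE
  apply intervalIntegral.integral_nonneg hr
  intro u hu
  unfold ee
  exact mul_nonneg hu.1 (by positivity)

include hLap in
lemma EEzero {r : ℝ} (hr : 0 ≤ r) : EE F ξ₁ ξ₂ ξ₃ ξ₄ r = 0 := by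
  have h0 : EE F ξ₁ ξ₂ ξ₃ ξ₄ 0 = 0 := by
    unfold EE; exact intervalIntegral.integral_same
  have hmono : AntitoneOn (EE F ξ₁ ξ₂ ξ₃ ξ₄) (Set.Ici 0) := by
    apply antitoneOn_of_deriv_nonpos (convex_Ici 0) (EEcont ξ₁ ξ₂ ξ₃ ξ₄ hF).continuousOn
    · intro x _
      exact (dEE ξ₁ ξ₂ ξ₃ ξ₄ hF x).differentiableAt.differentiableWithinAt
    · intro x hx
      rw [interior_Ici] at hx
      rw [(dEE ξ₁ ξ₂ ξ₃ ξ₄ hF x).deriv, dEEval ξ₁ ξ₂ ξ₃ ξ₄ hF hLap hx]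
      apply neg_nonpos.mpr
      apply mul_nonneg (div_nonneg (by norm_num) hx.le)
      apply intervalIntegral.integral_nonneg hx.le
      intro u hu
      exact mul_nonneg hu.1 (by positivity)
  have h1 : EE F ξ₁ ξ₂ ξ₃ ξ₄ r ≤ 0 := by
    have := hmono (Set.self_mem_Ici) (Set.mem_Ici.mpr hr) hr
    rwa [h0] at this
  exact le_antisymm h1 (EEnonneg ξ₁ ξ₂ ξ₃ ξ₄ hF hr)

include hLap in
lemma vanish {r s : ℝ} (hs : 0 < s) (hsr : s < r) :
    uur F ξ₁ ξ₂ ξ₃ ξ₄ r s = 0 ∧ uus F ξ₁ ξ₂ ξ₃ ξ₄ r s = 0 := by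
  have hr : 0 < r := hs.trans hsr
  have hEE : EE F ξ₁ ξ₂ ξ₃ ξ₄ r = 0 := EEzero ξ₁ ξ₂ ξ₃ ξ₄ hF hLap hr.le
  have ces : Continuous fun t => ee F ξ₁ ξ₂ ξ₃ ξ₄ r t := by
    have h := cee2 ξ₁ ξ₂ ξ₃ ξ₄ hF; fun_prop
  have hnonneg : ∀ t, 0 ≤ t → 0 ≤ ee F ξ₁ ξ₂ ξ₃ ξ₄ r t := by
    intro t ht; exact mul_nonneg ht (by positivity)
  have hiee : ∀ a b : ℝ, IntervalIntegrable (fun t => ee F ξ₁ ξ₂ ξ₃ ξ₄ r t) volume a b :=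
    fun a b => ces.intervalIntegrable a b
  -- pointwise vanishing of `ee r` on (0, r)
  have hee : ee F ξ₁ ξ₂ ξ₃ ξ₄ r s = 0 := by
    by_contra hne
    have hpos : 0 < ee F ξ₁ ξ₂ ξ₃ ξ₄ r s := lt_of_le_of_ne (hnonneg s hs.le) (Ne.symm hne)
    obtain ⟨δ, hδpos, hδ⟩ := Metric.continuousAt_iff.mp ces.continuousAt
      (ee F ξ₁ ξ₂ ξ₃ ξ₄ r s / 2) (half_pos hpos)
    set a := max (s - δ/2) (s/2) with ha
    set b := min (s + δ/2) ((s + r)/2) with hb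
    have ha0 : 0 < a := lt_max_of_lt_right (by positivity)
    have has : a < s := max_lt (by linarith) (by linarith)
    have hsb : s < b := lt_min (by linarith) (by linarith)
    have hbr : b ≤ r := le_trans (min_le_right _ _) (by linarith)
    have hab : a < b := has.trans hsb
    have hlow : ∀ t ∈ Set.Icc a b, ee F ξ₁ ξ₂ ξ₃ ξ₄ r s / 2 ≤ ee F ξ₁ ξ₂ ξ₃ ξ₄ r t := by
      intro t ht
      have h1 : |t - s| < δ := by
        rw [abs_lt]
        constructor
        · have := ht.1; have : s - δ/2 ≤ t := le_trans (le_max_left _ _) ht.1; linarith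
        · have : t ≤ s + δ/2 := le_trans ht.2 (min_le_left _ _); linarith
      have h2 := hδ (show dist t s < δ by rwa [Real.dist_eq])
      rw [Real.dist_eq, abs_lt] at h2
      linarith [h2.1]
    have hmid : (b - a) * (ee F ξ₁ ξ₂ ξ₃ ξ₄ r s / 2) ≤ ∫ t in a..b, ee F ξ₁ ξ₂ ξ₃ ξ₄ r t := by
      have := intervalIntegral.integral_mono_on hab.le intervalIntegrable_const (hiee a b) hlow
      rwa [intervalIntegral.integral_const, smul_eq_mul] at this
    have hsplit : EE F ξ₁ ξ₂ ξ₃ ξ₄ r = (∫ t in (0:ℝ)..a, ee F ξ₁ ξ₂ ξ₃ ξ₄ r t)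
        + ((∫ t in a..b, ee F ξ₁ ξ₂ ξ₃ ξ₄ r t) + ∫ t in b..r, ee F ξ₁ ξ₂ ξ₃ ξ₄ r t) := by
      unfold EE
      rw [intervalIntegral.integral_add_adjacent_intervals (hiee a b) (hiee b r),
        intervalIntegral.integral_add_adjacent_intervals (hiee 0 a) (hiee a r)]
    have hI1 : 0 ≤ ∫ t in (0:ℝ)..a, ee F ξ₁ ξ₂ ξ₃ ξ₄ r t :=
      intervalIntegral.integral_nonneg ha0.le (fun u hu => hnonneg u hu.1)
    have hI3 : 0 ≤ ∫ t in b..r, ee F ξ₁ ξ₂ ξ₃ ξ₄ r t :=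
      intervalIntegral.integral_nonneg hbr (fun u hu => hnonneg u (le_trans (ha0.trans hab).le hu.1))
    have : 0 < EE F ξ₁ ξ₂ ξ₃ ξ₄ r := by
      rw [hsplit]
      have hmidpos : 0 < ∫ t in a..b, ee F ξ₁ ξ₂ ξ₃ ξ₄ r t :=
        lt_of_lt_of_le (mul_pos (by linarith : (0:ℝ) < b - a) (half_pos hpos)) hmid
      linarith
    rw [hEE] at this
    exact lt_irrefl 0 this
  -- conclude
  have hsum : (uur F ξ₁ ξ₂ ξ₃ ξ₄ r s)^2 + (uus F ξ₁ ξ₂ ξ₃ ξ₄ r s)^2 = 0 := by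
    unfold ee at hee
    have := mul_eq_zero.mp hee
    rcases this with h | h
    · exact absurd h hs.ne'
    · exact h
  constructor
  · have h1 : (uur F ξ₁ ξ₂ ξ₃ ξ₄ r s)^2 = 0 := by nlinarith [sq_nonneg (uus F ξ₁ ξ₂ ξ₃ ξ₄ r s), sq_nonneg (uur F ξ₁ ξ₂ ξ₃ ξ₄ r s)]
    exact pow_eq_zero_iff two_ne_zero |>.mp h1
  · have h1 : (uus F ξ₁ ξ₂ ξ₃ ξ₄ r s)^2 = 0 := by nlinarith [sq_nonneg (uus F ξ₁ ξ₂ ξ₃ ξ₄ r s), sq_nonneg (uur F ξ₁ ξ₂ ξ₃ ξ₄ r s)]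
    exact pow_eq_zero_iff two_ne_zero |>.mp h1

include hLap in
lemma uuzero {R : ℝ} (hR : 0 < R) : uu F ξ₁ ξ₂ ξ₃ ξ₄ R 0 = 0 := by
  have hdiag : ∀ t : ℝ, uu F ξ₁ ξ₂ ξ₃ ξ₄ t t = 0 := by
    intro t; unfold uu; ring
  -- step 1 : uu (R/2) ε = 0 for ε ∈ (0, R/2)
  have step1 : ∀ ε : ℝ, 0 < ε → ε < R/2 → uu F ξ₁ ξ₂ ξ₃ ξ₄ (R/2) ε = 0 := by
    intro ε hε hεR
    have hfc : ContinuousOn (fun t => uu F ξ₁ ξ₂ ξ₃ ξ₄ (R/2) t) (Set.Icc ε (R/2)) := by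
      have h := cuu ξ₁ ξ₂ ξ₃ ξ₄ hF
      exact Continuous.continuousOn (by fun_prop)
    have hff' : ∀ x ∈ Set.Ioo ε (R/2), HasDerivAt (fun t => uu F ξ₁ ξ₂ ξ₃ ξ₄ (R/2) t)
        ((fun _ => (0:ℝ)) x) x := by
      intro x hx
      have hzero := (vanish ξ₁ ξ₂ ξ₃ ξ₄ hF hLap (hε.trans hx.1) hx.2).2
      have := duu_s ξ₁ ξ₂ ξ₃ ξ₄ hF (R/2) x
      rwa [hzero] at this
    obtain ⟨c, _, hc⟩ := exists_hasDerivAt_eq_slope _ _ hεR hfc hff'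
    have hne : R/2 - ε ≠ 0 := by linarith
    have := hc.symm
    rw [div_eq_iff hne] at this
    have h2 : uu F ξ₁ ξ₂ ξ₃ ξ₄ (R/2) (R/2) - uu F ξ₁ ξ₂ ξ₃ ξ₄ (R/2) ε = 0 := by
      rw [this]; ring
    rw [hdiag (R/2)] at h2
    linarith
  -- step 2 : uu (R-ε) ε = 0 for ε ∈ (0, R/2)
  have step2 : ∀ ε : ℝ, 0 < ε → ε < R/2 → uu F ξ₁ ξ₂ ξ₃ ξ₄ (R - ε) ε = 0 := by
    intro ε hε hεR
    have hab : R/2 < R - ε := by linarith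
    have hfc : ContinuousOn (fun t => uu F ξ₁ ξ₂ ξ₃ ξ₄ t ε) (Set.Icc (R/2) (R - ε)) := by
      have h := cuu ξ₁ ξ₂ ξ₃ ξ₄ hF
      exact Continuous.continuousOn (by fun_prop)
    have hff' : ∀ x ∈ Set.Ioo (R/2) (R - ε), HasDerivAt (fun t => uu F ξ₁ ξ₂ ξ₃ ξ₄ t ε)
        ((fun _ => (0:ℝ)) x) x := by
      intro x hx
      have hzero := (vanish ξ₁ ξ₂ ξ₃ ξ₄ hF hLap hε (hεR.trans hx.1)).1
      have := duu_r ξ₁ ξ₂ ξ₃ ξ₄ hF ε x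
      rwa [hzero] at this
    obtain ⟨c, _, hc⟩ := exists_hasDerivAt_eq_slope _ _ hab hfc hff'
    have hne : (R - ε) - R/2 ≠ 0 := by linarith
    have := hc.symm
    rw [div_eq_iff hne] at this
    have h2 : uu F ξ₁ ξ₂ ξ₃ ξ₄ (R - ε) ε - uu F ξ₁ ξ₂ ξ₃ ξ₄ (R/2) ε = 0 := by
      rw [this]; ring
    rw [step1 ε hε hεR] at h2
    linarith
  -- step 3 : limit ε → 0⁺
  have hψ : Continuous fun ε => uu F ξ₁ ξ₂ ξ₃ ξ₄ (R - ε) ε := by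
    have h := cuu ξ₁ ξ₂ ξ₃ ξ₄ hF
    fun_prop
  have h1 : Filter.Tendsto (fun ε => uu F ξ₁ ξ₂ ξ₃ ξ₄ (R - ε) ε) (nhdsWithin 0 (Set.Ioi 0))
      (nhds (uu F ξ₁ ξ₂ ξ₃ ξ₄ (R - 0) 0)) :=
    (hψ.continuousAt).continuousWithinAt
  have h2 : Filter.Tendsto (fun ε => uu F ξ₁ ξ₂ ξ₃ ξ₄ (R - ε) ε) (nhdsWithin 0 (Set.Ioi 0))
      (nhds 0) := by
    apply Filter.Tendsto.congr' _ tendsto_const_nhds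
    have hmem : Set.Ioo (0:ℝ) (R/2) ∈ nhdsWithin 0 (Set.Ioi 0) :=
      Ioo_mem_nhdsGT_of_mem ⟨le_refl 0, by positivity⟩
    filter_upwards [hmem] with ε hε
    exact (step2 ε hε.1 hε.2).symm
  have := tendsto_nhds_unique h1 h2
  simpa using this

end AsgeirssonAux6
noncomputable section AsgeirssonFinal
variable {F : ℝ × ℝ × ℝ × ℝ → ℝ} (ξ₁ ξ₂ ξ₃ ξ₄ : ℝ)

lemma ggR0 (R : ℝ) : gg F ξ₁ ξ₂ ξ₃ ξ₄ R 0
    = (2*π) * ∫ θ in (0:ℝ)..(2*π), F (ξ₁ + R * cos θ, ξ₂, ξ₃, ξ₄ + R * sin θ) := by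
  unfold gg
  have h1 : (∫ θ in (0:ℝ)..(2*π), ∫ φ in (0:ℝ)..(2*π), F (Pt ξ₁ ξ₂ ξ₃ ξ₄ R 0 θ φ))
      = ∫ θ in (0:ℝ)..(2*π), ∫ φ in (0:ℝ)..(2*π),
        F (ξ₁ + R * cos θ, ξ₂, ξ₃, ξ₄ + R * sin θ) :=
    dd_congr fun θ φ => by simp [Pt]
  rw [h1]
  simp only [intervalIntegral.integral_const, sub_zero, smul_eq_mul]
  rw [intervalIntegral.integral_const_mul]

lemma gg0R (R : ℝ) : gg F ξ₁ ξ₂ ξ₃ ξ₄ 0 R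
    = (2*π) * ∫ θ in (0:ℝ)..(2*π), F (ξ₁, ξ₂ + R * cos θ, ξ₃ + R * sin θ, ξ₄) := by
  unfold gg
  have h1 : (∫ θ in (0:ℝ)..(2*π), ∫ φ in (0:ℝ)..(2*π), F (Pt ξ₁ ξ₂ ξ₃ ξ₄ 0 R θ φ))
      = ∫ θ in (0:ℝ)..(2*π), ∫ φ in (0:ℝ)..(2*π),
        F (ξ₁, ξ₂ + R * cos φ, ξ₃ + R * sin φ, ξ₄) :=
    dd_congr fun θ φ => by simp [Pt]
  rw [h1, intervalIntegral.integral_const, sub_zero, smul_eq_mul]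

end AsgeirssonFinal

open Real

/-- Asgeirsson's theorem (mean-value form): for a smooth global solution of the
ultrahyperbolic equation `Δ₁₄ F = Δ₂₃ F`, the integral of `F` over a circle of radius `R`
in the `(ξ₁,ξ₄)`-plane equals the integral over the circle of the same radius in the
`(ξ₂,ξ₃)`-plane. -/
theorem asgeirsson_mean_value
    (F : ℝ × ℝ × ℝ × ℝ → ℝ) (hF : ContDiff ℝ (⊤ : ℕ∞) F)
    (hpde : ∀ a b c d : ℝ,
      deriv (fun t => deriv (fun s => F (s, b, c, d)) t) a
        + deriv (fun t => deriv (fun s => F (a, b, c, s)) t) d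
      = deriv (fun t => deriv (fun s => F (a, s, c, d)) t) b
        + deriv (fun t => deriv (fun s => F (a, b, s, d)) t) c)
    (ξ₁ ξ₂ ξ₃ ξ₄ : ℝ) (R : ℝ) (hR : 0 < R) :
    ∫ θ in (0 : ℝ)..(2 * π), F (ξ₁ + R * cos θ, ξ₂, ξ₃, ξ₄ + R * sin θ)
      = ∫ θ in (0 : ℝ)..(2 * π), F (ξ₁, ξ₂ + R * cos θ, ξ₃ + R * sin θ, ξ₄) := by
  have hLap := pde_pt hF hpde
  have hzero : uu F ξ₁ ξ₂ ξ₃ ξ₄ R 0 = 0 := uuzero ξ₁ ξ₂ ξ₃ ξ₄ hF hLap hR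
  have heq : gg F ξ₁ ξ₂ ξ₃ ξ₄ R 0 = gg F ξ₁ ξ₂ ξ₃ ξ₄ 0 R := by
    unfold uu at hzero
    linarith
  rw [ggR0 ξ₁ ξ₂ ξ₃ ξ₄ R, gg0R ξ₁ ξ₂ ξ₃ ξ₄ R] at heq
  have h2π : (2*π : ℝ) ≠ 0 := by positivity
  exact mul_left_cancel₀ h2π heq
end

section
/- Let f : ℝ³ → ℝ be continuous with compact support, and define the dual John transform by the average over all lines through a point: ř(p) = (1/4π) ∫_{S²} ( ∫_ℝ f(p + s·w) ds ) dw. Then ř(p) = (1/2π) ∫_{ℝ³} f(q) / |p − q|² dq, i.e. ř = (1/2π) (D⁻² * f) where D(x) = |x|. -/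
open MeasureTheory Real

open Metric Set

/-!
In polar coordinates `q = p + r • w` (`r > 0`, `‖w‖ = 1`) the volume element is
`r ^ (d - 1) dr dw`, so the weight `‖p - q‖ ^ (-(d - 1))` cancels the Jacobian and
`∫ f q / ‖p - q‖ ^ (d - 1) dq` becomes the integral over the sphere of the integrals of `f`
along the rays from `p`. A line through `p` is the union of the rays in the directions `w` and
`-w`, and the surface measure is invariant under `w ↦ -w`, so integrating over all lines
counts every ray twice.
-/

local notation "dim" => Module.finrank ℝ

namespace MeasureTheory

variable {E F : Type*} [NormedAddCommGroup E] [NormedSpace ℝ E] [NormedAddCommGroup F]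

lemma integrable_comp_add_smul {f : E → F} (hf : Continuous f) (hsupp : HasCompactSupport f)
    (p : E) {w : E} (hw : ‖w‖ = 1) : Integrable fun s : ℝ => f (p + s • w) := by
  have hiso : Isometry fun s : ℝ => p + s • w := by
    refine Isometry.of_dist_eq fun s t => ?_
    rw [dist_add_left, dist_eq_norm, ← sub_smul, norm_smul, hw, mul_one, Real.dist_eq,
      Real.norm_eq_abs]
  exact (hf.comp (by fun_prop)).integrable_of_hasCompactSupport
    (hsupp.comp_isClosedEmbedding hiso.isClosedEmbedding)

lemma setIntegral_Ioi_pow_smul_div_norm_pow (f : E → ℝ) (p : E) (w : sphere (0 : E) 1) :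
    ∫ r in Ioi (0 : ℝ), r ^ (dim E - 1) • (f (p + r • (w : E)) / ‖r • (w : E)‖ ^ (dim E - 1))
      = ∫ r in Ioi (0 : ℝ), f (p + r • (w : E)) := by
  refine setIntegral_congr_fun measurableSet_Ioi fun r (hr : 0 < r) => ?_
  rw [norm_smul, norm_eq_of_mem_sphere, mul_one, Real.norm_of_nonneg hr.le, smul_eq_mul,
    mul_div_cancel₀ _ (pow_ne_zero _ hr.ne')]

section

variable [NormedSpace ℝ F]

lemma Measure.integral_volumeIoiPow (n : ℕ) (u : ℝ → F) :
    ∫ r, u r ∂(volumeIoiPow n) = ∫ r in Ioi (0 : ℝ), r ^ n • u r := by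
  simp only [volumeIoiPow, ENNReal.ofReal]
  rw [integral_withDensity_eq_integral_smul (measurable_subtype_coe.pow_const _).real_toNNReal,
    integral_subtype_comap measurableSet_Ioi fun r : ℝ => (r ^ n).toNNReal • u r]
  refine setIntegral_congr_fun measurableSet_Ioi fun r hr => ?_
  rw [NNReal.smul_def, Real.coe_toNNReal _ (pow_nonneg hr.out.le _)]

lemma integral_eq_integral_Ioi_add_integral_Ioi_neg {h : ℝ → F} (hh : Integrable h) :
    ∫ s, h s = (∫ s in Ioi 0, h s) + ∫ s in Ioi 0, h (-s) := by
  rw [integral_comp_neg_Ioi, neg_zero, add_comm,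
    intervalIntegral.integral_Iic_add_Ioi hh.integrableOn hh.integrableOn]

end

section HaarMeasure

variable [FiniteDimensional ℝ E] [MeasurableSpace E] [BorelSpace E] (μ : Measure E)
  [μ.IsAddHaarMeasure]

instance Measure.isNegInvariant_toSphere : μ.toSphere.IsNegInvariant := by
  refine ⟨Measure.ext fun s hs => ?_⟩
  have himage : ((↑) : sphere (0 : E) 1 → E) '' (Neg.neg ⁻¹' s) = -((↑) '' s) := by
    change _ '' (-s) = _
    rw [← image_neg_eq_neg, ← image_neg_eq_neg, image_image, image_image]
    simp
  rw [Measure.neg, Measure.map_apply measurable_neg hs, toSphere_apply' _ (measurable_neg hs),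
    toSphere_apply' _ hs, himage, Set.smul_neg, Measure.measure_neg]

lemma Integrable.comp_smul_sphere_prod {g : E → F} (hg : Integrable g μ) :
    Integrable (fun z : sphere (0 : E) 1 × Ioi (0 : ℝ) => g ((z.2 : ℝ) • (z.1 : E)))
      (μ.toSphere.prod (Measure.volumeIoiPow (dim E - 1))) := by
  have hpunctured :=
    (integrableOn_iff_comap_subtypeVal (measurableSet_singleton (0 : E)).compl).1 hg.integrableOn
  refine (μ.measurePreserving_homeomorphUnitSphereProd.integrable_comp_emb
    (Homeomorph.measurableEmbedding _)).1 ?_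
  convert hpunctured using 1
  ext x
  simp [smul_inv_smul₀ (norm_ne_zero_iff.2 x.2)]

lemma locallyIntegrable_inv_norm_pow_finrank_sub_one [Nontrivial E] :
    LocallyIntegrable (fun x : E => (‖x‖ ^ (dim E - 1))⁻¹) μ := by
  have hdim : 1 ≤ dim E := Module.finrank_pos
  refine locallyIntegrable_of_norm_le_rpow (C := 1) (α := (dim E - 1 : ℕ)) hdim
    (by rw [Nat.cast_sub hdim]; simp) (ae_of_all _ fun x => ?_) (by fun_prop)
  rw [one_mul, Real.rpow_neg (norm_nonneg x), Real.rpow_natCast, norm_inv, norm_pow, norm_norm]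

variable [NormedSpace ℝ F]

theorem Integrable.integral_Ioi_sphere {g : E → F} (hg : Integrable g μ) :
    Integrable (fun w : sphere (0 : E) 1 =>
      ∫ r in Ioi (0 : ℝ), r ^ (dim E - 1) • g (r • (w : E))) μ.toSphere :=
  (hg.comp_smul_sphere_prod μ).integral_prod_left.congr <| ae_of_all _ fun w =>
    Measure.integral_volumeIoiPow _ fun r => g (r • (w : E))

variable [Nontrivial E]

lemma integral_eq_integral_sphere_prod (g : E → F) :
    ∫ x, g x ∂μ = ∫ z : sphere (0 : E) 1 × Ioi (0 : ℝ), g ((z.2 : ℝ) • (z.1 : E))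
      ∂(μ.toSphere.prod (Measure.volumeIoiPow (dim E - 1))) := by
  have hpunctured := integral_subtype_comap (μ := μ) (measurableSet_singleton 0).compl g
  rw [restrict_compl_singleton] at hpunctured
  rw [← hpunctured, ← μ.measurePreserving_homeomorphUnitSphereProd.integral_comp
    (Homeomorph.measurableEmbedding _)]
  congr with x
  simp [smul_inv_smul₀ (norm_ne_zero_iff.2 x.2)]

theorem integral_eq_integral_sphere_integral_Ioi {g : E → F} (hg : Integrable g μ) :
    ∫ x, g x ∂μ = ∫ w : sphere (0 : E) 1,
      (∫ r in Ioi (0 : ℝ), r ^ (dim E - 1) • g (r • (w : E))) ∂μ.toSphere := by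
  rw [integral_eq_integral_sphere_prod, integral_prod _ (hg.comp_smul_sphere_prod μ)]
  congr with w
  exact Measure.integral_volumeIoiPow _ fun r => g (r • (w : E))

lemma integrable_comp_add_div_norm_pow {f : E → ℝ} (hf : Continuous f)
    (hsupp : HasCompactSupport f) (p : E) :
    Integrable (fun q => f (p + q) / ‖q‖ ^ (dim E - 1)) μ := by
  simpa only [smul_eq_mul, div_eq_mul_inv] using
    (locallyIntegrable_inv_norm_pow_finrank_sub_one μ).integrable_smul_left_of_hasCompactSupport
      (g := fun q => f (p + q)) (by fun_prop) (hsupp.comp_homeomorph (Homeomorph.addLeft p))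

theorem integral_sphere_integral_line_eq_two_mul_integral {f : E → ℝ} (hf : Continuous f)
    (hsupp : HasCompactSupport f) (p : E) :
    ∫ w : sphere (0 : E) 1, (∫ s : ℝ, f (p + s • (w : E))) ∂μ.toSphere
      = 2 * ∫ q, f q / ‖p - q‖ ^ (dim E - 1) ∂μ := by
  set ray : sphere (0 : E) 1 → ℝ := fun w => ∫ s in Ioi (0 : ℝ), f (p + s • (w : E))
  have hg := integrable_comp_add_div_norm_pow μ hf hsupp p
  have hray : Integrable ray μ.toSphere :=
    (hg.integral_Ioi_sphere μ).congr (ae_of_all _ (setIntegral_Ioi_pow_smul_div_norm_pow f p))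
  have hneg := Measure.measurePreserving_neg μ.toSphere
  have hneg_emb := (MeasurableEquiv.neg (sphere (0 : E) 1)).measurableEmbedding
  have hray_neg : Integrable (fun w => ray (-w)) μ.toSphere :=
    (hneg.integrable_comp_emb hneg_emb).2 hray
  have hline (w : sphere (0 : E) 1) : ∫ s : ℝ, f (p + s • (w : E)) = ray w + ray (-w) := by
    rw [integral_eq_integral_Ioi_add_integral_Ioi_neg
      (integrable_comp_add_smul hf hsupp p (norm_eq_of_mem_sphere w))]
    simp [ray]
  calc ∫ w : sphere (0 : E) 1, (∫ s : ℝ, f (p + s • (w : E))) ∂μ.toSphere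
      = ∫ w, (ray w + ray (-w)) ∂μ.toSphere := by simp_rw [hline]
    _ = 2 * ∫ w, ray w ∂μ.toSphere := by
      rw [integral_add hray hray_neg, hneg.integral_comp hneg_emb, two_mul]
    _ = 2 * ∫ q, f (p + q) / ‖q‖ ^ (dim E - 1) ∂μ := by
      simp_rw [integral_eq_integral_sphere_integral_Ioi μ hg, setIntegral_Ioi_pow_smul_div_norm_pow]
      rfl
    _ = 2 * ∫ q, f q / ‖p - q‖ ^ (dim E - 1) ∂μ := by
      rw [← integral_add_left_eq_self (fun q => f q / ‖p - q‖ ^ (dim E - 1)) p]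
      simp

end HaarMeasure

end MeasureTheory

/-- The dual John transform (average over all lines through a point) equals convolution
with `1/(2π |x|²)`: `ř(p) = (1/2π) ∫ f(q)/|p−q|² dq`. The sphere carries the surface
measure `volume.toSphere` (of total mass `4π`). -/
theorem dual_john_transform_eq_convolution
    (f : EuclideanSpace ℝ (Fin 3) → ℝ) (hf : Continuous f) (hsupp : HasCompactSupport f)
    (p : EuclideanSpace ℝ (Fin 3)) :
    (1 / (4 * π)) * ∫ w : Metric.sphere (0 : EuclideanSpace ℝ (Fin 3)) 1,
        (∫ s : ℝ, f (p + s • (w : EuclideanSpace ℝ (Fin 3))))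
        ∂((volume : Measure (EuclideanSpace ℝ (Fin 3))).toSphere)
      = (1 / (2 * π)) * ∫ q : EuclideanSpace ℝ (Fin 3), f q / ‖p - q‖ ^ 2 := by
  rw [integral_sphere_integral_line_eq_two_mul_integral volume hf hsupp p,
    finrank_euclideanSpace_fin]
  field_simp
  ring
end
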